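/- arXiv:1307.1252 — 12 statements merged into one kernel-verified Lean document; each statement's English description precedes it below -/
import Mathlib

section
/- Let E = (C, V) be a single-crossing election, and let Φ be a k-CC assignment that assigns to each voter her most preferred candidate among the set Φ(V) of selected candidates. Let c_j be the candidate in Φ(V) that is least preferred by the first voter v_1. Then the set of voters assigned to c_j forms a suffix of the voter ordering: if Φ(v_i) = c_j and i' > i, then Φ(v_{i'}) = c_j. -/
/-- In a single-crossing election, if a `k`-CC assignment `Φ` gives each
voter her most preferred candidate in `Φ(V)`, and `c_j` is the candidate in `Φ(V)`
least preferred by the first voter, then the voters assigned to `c_j` form a suffix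
of the voter ordering. -/
theorem cc_least_preferred_suffix {n k : ℕ} {C : Type*} [Fintype C] [DecidableEq C]
    (hn : 0 < n) (pos : Fin n → C → ℕ)
    (hinj : ∀ v : Fin n, Function.Injective (pos v))
    (hsc : ∀ a b : C, pos ⟨0, hn⟩ a < pos ⟨0, hn⟩ b →
      ∃ t : ℕ, ∀ v : Fin n, pos v a < pos v b ↔ (v : ℕ) < t)
    (Φ : Fin n → C)
    (hk : (Finset.univ.image Φ).card ≤ k)
    (htop : ∀ v : Fin n, ∀ c ∈ Finset.univ.image Φ, pos v (Φ v) ≤ pos v c)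
    (cj : C) (hcj : cj ∈ Finset.univ.image Φ)
    (hleast : ∀ c ∈ Finset.univ.image Φ, pos ⟨0, hn⟩ c ≤ pos ⟨0, hn⟩ cj) :
    ∀ i i' : Fin n, i < i' → Φ i = cj → Φ i' = cj := by
  intro i i' hii hi
  by_contra hne
  set c := Φ i' with hc
  have hcmem : c ∈ Finset.univ.image Φ := Finset.mem_image_of_mem Φ (Finset.mem_univ i')
  have hlt0 : pos ⟨0, hn⟩ c < pos ⟨0, hn⟩ cj :=
    lt_of_le_of_ne (hleast c hcmem) (fun h => hne (hinj _ h))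
  obtain ⟨t, ht⟩ := hsc c cj hlt0
  have hicj : pos i cj ≤ pos i c := hi ▸ htop i c hcmem
  have hit : ¬ ((i : ℕ) < t) := fun h => absurd ((ht i).mpr h) (not_lt.mpr hicj)
  have hi't : ¬ ((i' : ℕ) < t) := fun h => hit (lt_trans (by exact_mod_cast hii) h)
  have h1 : ¬ (pos i' c < pos i' cj) := fun h => hi't ((ht i').mp h)
  have h2 : pos i' c ≤ pos i' cj := htop i' cj hcj
  exact hne (hinj i' (le_antisymm h2 (not_lt.mp h1)))
end

section
/- Let E = (C, V) be a single-crossing election with C = {c_1, ..., c_m}, V = (v_1, ..., v_n), where v_1 has preference order c_1 ≻ ⋯ ≻ c_m. Then for every k ∈ [m], every dissatisfaction function α, and ℓ ∈ {ℓ_1, ℓ_∞}, there exists an optimal k-CC assignment Φ under α-ℓ-CC such that: for each candidate c_i with Φ^{-1}(c_i) ≠ ∅ there exist t_i ≤ t_i' with Φ^{-1}(c_i) = {v_{t_i}, ..., v_{t_i'}}, and for i < j with both Φ^{-1}(c_i) and Φ^{-1}(c_j) nonempty, t_i' < t_j (the contiguous blocks property). -/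
/-- For a single-crossing election whose first voter ranks
`c_1 ≻ ⋯ ≻ c_m` (candidates are `Fin m`, the rank of `c` for voter `v` is
`(prefs v c : ℕ) + 1`), for every `k ∈ [m]`, dissatisfaction function `α`, and
`ℓ ∈ {ℓ_1, ℓ_∞}`, some optimal `k`-CC assignment has the contiguous blocks
property. -/
theorem cc_optimal_contiguous_blocks {m n : ℕ} (hn : 0 < n)
    (prefs : Fin n → (Fin m ≃ Fin m))
    (hfirst : prefs ⟨0, hn⟩ = Equiv.refl (Fin m))
    (hsc : ∀ a b : Fin m, (prefs ⟨0, hn⟩ a : ℕ) < prefs ⟨0, hn⟩ b →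
      ∃ t : ℕ, ∀ v : Fin n, ((prefs v a : ℕ) < prefs v b ↔ (v : ℕ) < t))
    (k : ℕ) (hk1 : 1 ≤ k) (hkm : k ≤ m)
    (α : ℕ → ℕ) (hα : Monotone α) (hα1 : α 1 = 0)
    (cost : (Fin n → Fin m) → ℕ)
    (hcost : cost = (fun Φ => ∑ v : Fin n, α ((prefs v (Φ v) : ℕ) + 1)) ∨
             cost = (fun Φ => Finset.univ.sup fun v : Fin n => α ((prefs v (Φ v) : ℕ) + 1))) :
    ∃ Φ : Fin n → Fin m,
      (Finset.univ.image Φ).card ≤ k ∧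
      (∀ Ψ : Fin n → Fin m, (Finset.univ.image Ψ).card ≤ k → cost Φ ≤ cost Ψ) ∧
      (∀ c : Fin m, (∃ v, Φ v = c) → ∃ t t' : ℕ, t ≤ t' ∧
        ∀ v : Fin n, Φ v = c ↔ (t ≤ (v : ℕ) ∧ (v : ℕ) ≤ t')) ∧
      (∀ c c' : Fin m, c < c' → ∀ v w : Fin n, Φ v = c → Φ w = c' → v < w) := by
  have mpos : 0 < m := lt_of_lt_of_le hk1 hkm
  haveI : Nonempty (Fin n) := ⟨⟨0, hn⟩⟩
  classical
  -- valid assignments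
  set valid : Finset (Fin n → Fin m) :=
    Finset.univ.filter (fun Φ => (Finset.univ.image Φ).card ≤ k) with hvalid
  have hvmem : ∀ Φ : Fin n → Fin m, Φ ∈ valid ↔ (Finset.univ.image Φ).card ≤ k := by
    intro Φ; simp [hvalid]
  have hvne : valid.Nonempty := by
    refine ⟨fun _ => (⟨0, mpos⟩ : Fin m), ?_⟩
    rw [hvmem]
    have : (Finset.univ.image (fun _ : Fin n => (⟨0, mpos⟩ : Fin m))) =
        {(⟨0, mpos⟩ : Fin m)} := by
      apply Finset.image_const
      exact Finset.univ_nonempty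
    rw [this]; simpa using hk1
  obtain ⟨Φ₀, hΦ₀mem, hΦ₀min⟩ := valid.exists_min_image cost hvne
  set P : (Fin n → Fin m) → ℕ := fun Ψ => ∑ z : Fin n, (prefs z (Ψ z) : ℕ) with hP
  set T : Finset (Fin n → Fin m) := valid.filter (fun Ψ => cost Ψ = cost Φ₀) with hT
  have hTne : T.Nonempty := ⟨Φ₀, by simp [hT, hΦ₀mem]⟩
  obtain ⟨Φ, hΦT, hΦminP⟩ := T.exists_min_image P hTne
  have hΦvalid : Φ ∈ valid := (Finset.mem_filter.mp hΦT).1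
  have hΦcost : cost Φ = cost Φ₀ := (Finset.mem_filter.mp hΦT).2
  -- key exchange lemma
  have key : ∀ (u : Fin n) (x : Fin m), (∃ z, Φ z = x) →
      (prefs u x : ℕ) < prefs u (Φ u) → False := by
    rintro u x ⟨z₀, hz₀⟩ hlt
    set Φ' := Function.update Φ u x with hΦ'
    have hpt : ∀ z : Fin n, α ((prefs z (Φ' z) : ℕ) + 1) ≤ α ((prefs z (Φ z) : ℕ) + 1) := by
      intro z
      by_cases hz : z = u
      · subst hz; rw [hΦ', Function.update_self]; exact hα (by omega)
      · rw [hΦ', Function.update_of_ne hz]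
    have himg : Finset.univ.image Φ' ⊆ Finset.univ.image Φ := by
      intro y hy
      obtain ⟨z, _, hz⟩ := Finset.mem_image.mp hy
      by_cases hzu : z = u
      · subst hzu
        rw [hΦ', Function.update_self] at hz
        exact Finset.mem_image.mpr ⟨z₀, Finset.mem_univ _, by rw [hz₀, hz]⟩
      · rw [hΦ', Function.update_of_ne hzu] at hz
        exact Finset.mem_image.mpr ⟨z, Finset.mem_univ _, hz⟩
    have hΦ'valid : Φ' ∈ valid := by
      rw [hvmem]
      exact le_trans (Finset.card_le_card himg) ((hvmem Φ).mp hΦvalid)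
    have hcost' : cost Φ' ≤ cost Φ := by
      rcases hcost with h | h
      · rw [h]; exact Finset.sum_le_sum fun z _ => hpt z
      · rw [h]; exact Finset.sup_mono_fun fun z _ => hpt z
    have hΦ'T : Φ' ∈ T := by
      rw [hT, Finset.mem_filter]
      refine ⟨hΦ'valid, le_antisymm ?_ (hΦ₀min Φ' hΦ'valid)⟩
      rw [← hΦcost]; exact hcost'
    have hPlt : P Φ' < P Φ := by
      rw [hP]
      apply Finset.sum_lt_sum
      · intro z _
        by_cases hz : z = u
        · subst hz; rw [hΦ', Function.update_self]; exact hlt.le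
        · rw [hΦ', Function.update_of_ne hz]
      · exact ⟨u, Finset.mem_univ _, by rw [hΦ', Function.update_self]; exact hlt⟩
    exact absurd (hΦminP Φ' hΦ'T) (not_le.mpr hPlt)
  -- monotonicity of Φ
  have hmono : ∀ v w : Fin n, v ≤ w → Φ v ≤ Φ w := by
    intro v w hvw
    rcases eq_or_lt_of_le hvw with h | h
    · subst h; exact le_refl _
    by_contra hba
    push_neg at hba
    set a := Φ w with ha
    set b := Φ v with hb
    have hab : a < b := hba
    have h0 : (prefs ⟨0, hn⟩ a : ℕ) < prefs ⟨0, hn⟩ b := by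
      rw [hfirst]; exact hab
    obtain ⟨t, ht⟩ := hsc a b h0
    by_cases hv : (v : ℕ) < t
    · exact key v a ⟨w, rfl⟩ ((ht v).mpr hv)
    · have hw : ¬ ((w : ℕ) < t) := by
        have : (v : ℕ) < w := h
        omega
      have hne : (prefs w a : ℕ) ≠ (prefs w b : ℕ) := by
        intro hEq
        have : a = b := (prefs w).injective (Fin.val_injective hEq)
        exact absurd this (ne_of_lt hab)
      have : (prefs w b : ℕ) < prefs w a := by
        have h1 : ¬ ((prefs w a : ℕ) < prefs w b) := fun hc => hw ((ht w).mp hc)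
        omega
      exact key w b ⟨v, rfl⟩ this
  refine ⟨Φ, (hvmem Φ).mp hΦvalid, ?_, ?_, ?_⟩
  · intro Ψ hΨ
    rw [hΦcost]
    exact hΦ₀min Ψ ((hvmem Ψ).mpr hΨ)
  · intro c ⟨v₀, hv₀⟩
    set F : Finset (Fin n) := Finset.univ.filter (fun v => Φ v = c) with hF
    have hFne : F.Nonempty := ⟨v₀, by simp [hF, hv₀]⟩
    set vmin := F.min' hFne with hvmin
    set vmax := F.max' hFne with hvmax
    have hminmem : Φ vmin = c := (Finset.mem_filter.mp (F.min'_mem hFne)).2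
    have hmaxmem : Φ vmax = c := (Finset.mem_filter.mp (F.max'_mem hFne)).2
    refine ⟨(vmin : ℕ), (vmax : ℕ), F.min'_le _ (F.max'_mem hFne), ?_⟩
    intro v
    constructor
    · intro hv
      have hvF : v ∈ F := by simp [hF, hv]
      exact ⟨F.min'_le v hvF, F.le_max' v hvF⟩
    · rintro ⟨h1, h2⟩
      have hle1 : Φ vmin ≤ Φ v := hmono vmin v h1
      have hle2 : Φ v ≤ Φ vmax := hmono v vmax h2
      rw [hminmem] at hle1; rw [hmaxmem] at hle2
      exact le_antisymm hle2 hle1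
  · intro c c' hcc v w hv hw
    by_contra hvw
    push_neg at hvw
    have : Φ w ≤ Φ v := hmono w v hvw
    rw [hv, hw] at this
    exact absurd hcc (not_lt.mpr this)
end

section
/- Let A[i, j, t] denote the minimum ℓ-cost of a t-CC assignment for the subelection consisting of voters v_1, ..., v_i and candidates c_1, ..., c_j of a single-crossing election whose first voter ranks c_1 ≻ ⋯ ≻ c_m. Then for i ≥ 1, j ≥ 2, t ≥ 2: A[i, j, t] = min( A[i, j−1, t], min over 0 ≤ i* < i of ℓ( A[i*, j−1, t−1], α(pos_{v_{i*+1}}(c_j)), ..., α(pos_{v_i}(c_j)) ) ), where ℓ applied to a list of values is their sum (utilitarian case) or their maximum (egalitarian case). -/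
/-- Aggregation of a list of dissatisfaction values: sum in the utilitarian case
(`util = true`), maximum in the egalitarian case (`util = false`). -/
def aggCC {ι : Type*} (util : Bool) (s : Finset ι) (f : ι → ℕ) : ℕ :=
  if util then ∑ l ∈ s, f l else s.sup f

/-- Combining a previous-cost value with the aggregated cost of a new block:
sum in the utilitarian case, maximum in the egalitarian case. -/
def combineCC (util : Bool) (a b : ℕ) : ℕ :=
  if util then a + b else max a b

/-- `AcostCC prefs α util i j t` is the optimal `ℓ`-aggregated dissatisfaction of a
`t`-CC assignment for the subelection on the first `i` voters and the first `j`
candidates. -/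
noncomputable def AcostCC {m n : ℕ} (prefs : Fin n → (Fin m ≃ Fin m)) (α : ℕ → ℕ)
    (util : Bool) (i j t : ℕ) : ℕ :=
  sInf { w : ℕ | ∃ Φ : Fin n → Fin m,
    (∀ l : Fin n, (l : ℕ) < i → ((Φ l : ℕ) < j)) ∧
    ((Finset.univ.filter (fun l : Fin n => (l : ℕ) < i)).image Φ).card ≤ t ∧
    w = aggCC util (Finset.univ.filter (fun l : Fin n => (l : ℕ) < i))
          (fun l => α ((prefs l (Φ l) : ℕ) + 1)) }

/-!
Fix an optimal assignment for `i` voters, the first `j` candidates and `t` representatives,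
and let `S` be the set of candidates it uses. If `c_j ∉ S` we are in the first alternative.
Otherwise let `v` be the first voter ranking `c_j` above every other member of `S`. The first
voter of the election ranks every other member of `S` above `c_j`, and by single-crossingness
such a preference flips at most once along the voters, so every voter from `v` on also ranks
`c_j` above the rest of `S`. Serving the voters from `v` on by `c_j`, and moving every earlier
voter from `c_j` to a member of `S \ {c_j}` it likes at least as much, costs no more and splits
the assignment into a `(t - 1)`-CC assignment of a prefix using `c_1, …, c_{j-1}` followed by a
block served by `c_j`. If there is no such `v`, the second move alone removes `c_j`.
-/

open Finset

section Aggregation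

variable {ι : Type*} (util : Bool)

lemma aggCC_mono {s : Finset ι} {f g : ι → ℕ} (h : ∀ x ∈ s, f x ≤ g x) :
    aggCC util s f ≤ aggCC util s g := by
  cases util
  · exact Finset.sup_mono_fun h
  · exact Finset.sum_le_sum h

lemma aggCC_union [DecidableEq ι] {s₁ s₂ : Finset ι} (h : Disjoint s₁ s₂) (f : ι → ℕ) :
    aggCC util (s₁ ∪ s₂) f = combineCC util (aggCC util s₁ f) (aggCC util s₂ f) := by
  cases util
  · exact Finset.sup_union
  · exact Finset.sum_union h

lemma combineCC_mono {a a' b b' : ℕ} (ha : a ≤ a') (hb : b ≤ b') :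
    combineCC util a b ≤ combineCC util a' b' := by
  cases util
  · exact max_le_max ha hb
  · exact Nat.add_le_add ha hb

lemma aggCC_filter_lt_eq_combineCC {n k i : ℕ} (hki : k ≤ i) (f : Fin n → ℕ) :
    aggCC util (univ.filter fun l : Fin n => (l : ℕ) < i) f =
      combineCC util (aggCC util (univ.filter fun l : Fin n => (l : ℕ) < k) f)
        (aggCC util (univ.filter fun l : Fin n => k ≤ (l : ℕ) ∧ (l : ℕ) < i) f) := by
  rw [← aggCC_union util]
  · congr 1
    ext l
    simp only [mem_filter, mem_univ, true_and, mem_union]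
    omega
  · exact disjoint_filter.2 fun _ _ => by omega

end Aggregation

section Assignments

variable {m n : ℕ} (prefs : Fin n → (Fin m ≃ Fin m)) (α : ℕ → ℕ) (util : Bool)

def IsCCAssignment (i j t : ℕ) (Φ : Fin n → Fin m) : Prop :=
  (∀ l : Fin n, (l : ℕ) < i → (Φ l : ℕ) < j) ∧
    ((univ.filter fun l : Fin n => (l : ℕ) < i).image Φ).card ≤ t

def ccCost (s : Finset (Fin n)) (Φ : Fin n → Fin m) : ℕ :=
  aggCC util s fun l => α ((prefs l (Φ l) : ℕ) + 1)

lemma IsCCAssignment.mono {i j j' t t' : ℕ} {Φ : Fin n → Fin m} (h : IsCCAssignment i j t Φ)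
    (hj : j ≤ j') (ht : t ≤ t') : IsCCAssignment i j' t' Φ :=
  ⟨fun l hl => (h.1 l hl).trans_le hj, h.2.trans ht⟩

def ccCosts (i j t : ℕ) : Set ℕ :=
  {w | ∃ Φ, IsCCAssignment i j t Φ ∧
    w = ccCost prefs α util (univ.filter fun l : Fin n => (l : ℕ) < i) Φ}

lemma AcostCC_eq_sInf_ccCosts (i j t : ℕ) :
    AcostCC prefs α util i j t = sInf (ccCosts prefs α util i j t) := by
  simp only [AcostCC, ccCosts, IsCCAssignment, ccCost, and_assoc]

lemma AcostCC_le_ccCost {i j t : ℕ} {Φ : Fin n → Fin m} (h : IsCCAssignment i j t Φ) :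
    AcostCC prefs α util i j t ≤
      ccCost prefs α util (univ.filter fun l : Fin n => (l : ℕ) < i) Φ := by
  rw [AcostCC_eq_sInf_ccCosts]
  exact Nat.sInf_le ⟨Φ, h, rfl⟩

lemma exists_isCCAssignment_AcostCC_eq {i j t : ℕ} (hm : 0 < m) (hj : 0 < j) (ht : 0 < t) :
    ∃ Φ, IsCCAssignment i j t Φ ∧
      AcostCC prefs α util i j t =
        ccCost prefs α util (univ.filter fun l : Fin n => (l : ℕ) < i) Φ := by
  have hconst : IsCCAssignment (n := n) i j t fun _ => ⟨0, hm⟩ :=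
    ⟨fun _ _ => hj, (card_le_one.2 fun _ ha _ hb => by simp_all).trans ht⟩
  rw [AcostCC_eq_sInf_ccCosts]
  exact Nat.sInf_mem (s := ccCosts prefs α util i j t) ⟨_, _, hconst, rfl⟩

lemma AcostCC_anti {i j j' t t' : ℕ} (hm : 0 < m) (hj : 0 < j) (ht : 0 < t) (hjj' : j ≤ j')
    (htt' : t ≤ t') : AcostCC prefs α util i j' t' ≤ AcostCC prefs α util i j t := by
  obtain ⟨Φ, hΦ, hcost⟩ := exists_isCCAssignment_AcostCC_eq prefs α util (i := i) hm hj ht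
  exact hcost ▸ AcostCC_le_ccCost prefs α util (hΦ.mono hjj' htt')

lemma AcostCC_succ_le_combineCC {i k t : ℕ} (c : Fin m) (hc : 0 < (c : ℕ)) (ht : 0 < t)
    (hki : k ≤ i) :
    AcostCC prefs α util i (c + 1) (t + 1) ≤
      combineCC util (AcostCC prefs α util k c t)
        (ccCost prefs α util (univ.filter fun l : Fin n => k ≤ (l : ℕ) ∧ (l : ℕ) < i)
          fun _ => c) := by
  classical
  obtain ⟨Φ, hΦ, hcost⟩ := exists_isCCAssignment_AcostCC_eq prefs α util (i := k) c.pos hc ht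
  set Ψ : Fin n → Fin m := fun l => if (l : ℕ) < k then Φ l else c
  have hΨ : IsCCAssignment i (c + 1) (t + 1) Ψ := by
    refine ⟨fun l _ => ?_, ?_⟩
    · by_cases hlk : (l : ℕ) < k
      · simp only [Ψ, if_pos hlk]
        exact (hΦ.1 l hlk).trans (Nat.lt_succ_self _)
      · simp only [Ψ, if_neg hlk, Nat.lt_succ_self]
    · calc _ ≤ (insert c ((univ.filter fun l : Fin n => (l : ℕ) < k).image Φ)).card := by
            refine card_le_card (image_subset_iff.2 fun l _ => ?_)
            by_cases hlk : (l : ℕ) < k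
            · simp only [Ψ, if_pos hlk]
              exact mem_insert_of_mem (mem_image_of_mem Φ (by simpa using hlk))
            · simp only [Ψ, if_neg hlk, mem_insert_self]
        _ ≤ t + 1 := (card_insert_le _ _).trans (Nat.add_le_add_right hΦ.2 1)
  calc AcostCC prefs α util i (c + 1) (t + 1)
      ≤ ccCost prefs α util (univ.filter fun l : Fin n => (l : ℕ) < i) Ψ :=
        AcostCC_le_ccCost prefs α util hΨ
    _ = _ := aggCC_filter_lt_eq_combineCC util hki _
    _ ≤ _ := by
        rw [hcost]
        refine combineCC_mono util (aggCC_mono util fun l hl => ?_)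
          (aggCC_mono util fun l hl => ?_) <;> simp only [mem_filter] at hl
        · simp only [Ψ, if_pos hl.2, le_refl]
        · simp only [Ψ, if_neg (not_lt.2 hl.2.1), le_refl]

lemma exists_isCCAssignment_ccCost_le (hα : Monotone α) {S : Finset (Fin m)} {c : Fin m}
    {k t : ℕ} {Φ : Fin n → Fin m} (hcS : c ∈ S) (hS : S.card ≤ t + 1) (hSc : ∀ a ∈ S, a ≤ c)
    (hΦ : ∀ l : Fin n, (l : ℕ) < k → Φ l ∈ S)
    (halt : ∀ l : Fin n, (l : ℕ) < k → ∃ a ∈ S.erase c, (prefs l a : ℕ) ≤ prefs l c) :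
    ∃ Ψ, IsCCAssignment k c t Ψ ∧
      ccCost prefs α util (univ.filter fun l : Fin n => (l : ℕ) < k) Ψ ≤
        ccCost prefs α util (univ.filter fun l : Fin n => (l : ℕ) < k) Φ := by
  classical
  have : Nonempty (Fin m) := ⟨c⟩
  choose! alt halt_mem halt_le using halt
  set Ψ : Fin n → Fin m := fun l => if Φ l = c then alt l else Φ l
  have hΨ : ∀ l : Fin n, (l : ℕ) < k →
      Ψ l ∈ S.erase c ∧ α ((prefs l (Ψ l) : ℕ) + 1) ≤ α ((prefs l (Φ l) : ℕ) + 1) := by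
    intro l hl
    by_cases h : Φ l = c
    · simp only [Ψ, if_pos h, h]
      exact ⟨halt_mem l hl, hα (Nat.add_le_add_right (halt_le l hl) 1)⟩
    · simp only [Ψ, if_neg h]
      exact ⟨mem_erase.2 ⟨h, hΦ l hl⟩, le_rfl⟩
  refine ⟨Ψ, ⟨fun l hl => ?_, ?_⟩, aggCC_mono util fun l hl => (hΨ l (by simpa using hl)).2⟩
  · obtain ⟨hne, hmem⟩ := mem_erase.1 (hΨ l hl).1
    exact Fin.lt_def.1 (lt_of_le_of_ne (hSc _ hmem) hne)
  · calc _ ≤ (S.erase c).card :=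
          card_le_card (image_subset_iff.2 fun l hl => (hΨ l (by simpa using hl)).1)
      _ ≤ t := by rw [card_erase_of_mem hcS]; omega

lemma prefs_le_of_single_crossing {a b : Fin m} {θ : ℕ}
    (hθ : ∀ v : Fin n, ((prefs v a : ℕ) < prefs v b ↔ (v : ℕ) < θ)) {l l' : Fin n}
    (hll' : (l : ℕ) ≤ l') (hl : (prefs l b : ℕ) < prefs l a) : (prefs l' b : ℕ) ≤ prefs l' a := by
  by_contra! h
  have := (hθ l).2 (hll'.trans_lt ((hθ l').1 h))
  omega

variable {prefs α} in
lemma ccCost_const_le_of_single_crossing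
    (hsc : ∀ a b : Fin m, a < b →
      ∃ θ : ℕ, ∀ v : Fin n, ((prefs v a : ℕ) < prefs v b ↔ (v : ℕ) < θ))
    (hα : Monotone α) {S : Finset (Fin m)} {c : Fin m} {Φ : Fin n → Fin m} {l₀ : Fin n} {i : ℕ}
    (hSc : ∀ a ∈ S, a ≤ c) (hΦ : ∀ l : Fin n, (l : ℕ) < i → Φ l ∈ S)
    (hl₀ : ∀ a ∈ S.erase c, (prefs l₀ c : ℕ) < prefs l₀ a) :
    ccCost prefs α util (univ.filter fun l : Fin n => (l₀ : ℕ) ≤ l ∧ (l : ℕ) < i) (fun _ => c) ≤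
      ccCost prefs α util (univ.filter fun l : Fin n => (l₀ : ℕ) ≤ l ∧ (l : ℕ) < i) Φ := by
  refine aggCC_mono util fun l hl => hα (Nat.add_le_add_right ?_ 1)
  simp only [mem_filter, mem_univ, true_and] at hl
  by_cases h : Φ l = c
  · rw [h]
  · obtain ⟨θ, hθ⟩ := hsc (Φ l) c (lt_of_le_of_ne (hSc _ (hΦ l hl.2)) h)
    exact prefs_le_of_single_crossing prefs hθ hl.1 (hl₀ _ (mem_erase.2 ⟨h, hΦ l hl.2⟩))

variable {prefs α} in
lemma min_le_AcostCC_succ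
    (hsc : ∀ a b : Fin m, a < b →
      ∃ θ : ℕ, ∀ v : Fin n, ((prefs v a : ℕ) < prefs v b ↔ (v : ℕ) < θ))
    (hα : Monotone α) {i t : ℕ} (c : Fin m) :
    min (AcostCC prefs α util i c (t + 1))
      (sInf {w | ∃ k, k < i ∧ w = combineCC util (AcostCC prefs α util k c t)
        (ccCost prefs α util (univ.filter fun l : Fin n => k ≤ (l : ℕ) ∧ (l : ℕ) < i)
          fun _ => c)}) ≤
      AcostCC prefs α util i (c + 1) (t + 1) := by
  classical
  obtain ⟨Φ, hΦ, hcost⟩ :=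
    exists_isCCAssignment_AcostCC_eq prefs α util (i := i) c.pos (Nat.succ_pos _) (Nat.succ_pos _)
  set S := (univ.filter fun l : Fin n => (l : ℕ) < i).image Φ
  have hΦS : ∀ l : Fin n, (l : ℕ) < i → Φ l ∈ S :=
    fun l hl => mem_image_of_mem Φ (by simpa using hl)
  have hSc : ∀ a ∈ S, a ≤ c := by
    simp only [S, forall_mem_image, mem_filter, mem_univ, true_and]
    exact fun l hl => Fin.le_def.2 (Nat.lt_succ_iff.1 (hΦ.1 l hl))
  rcases em' (c ∈ S) with hcS | hcS
  · refine min_le_of_left_le (hcost ▸ AcostCC_le_ccCost prefs α util ⟨fun l hl => ?_, hΦ.2⟩)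
    have hne : Φ l ≠ c := fun h => hcS (h ▸ hΦS l hl)
    exact Fin.lt_def.1 (lt_of_le_of_ne (hSc _ (hΦS l hl)) hne)
  -- the first voter of `T` starts the block served by `c`; earlier voters can do without `c`
  set T := univ.filter fun l : Fin n => (l : ℕ) < i ∧ ∀ a ∈ S.erase c, (prefs l c : ℕ) < prefs l a
  by_cases hT : T.Nonempty
  · obtain ⟨l₀, hl₀T, hl₀min⟩ := T.exists_min_image (fun l => (l : ℕ)) hT
    simp only [T, mem_filter, mem_univ, true_and] at hl₀T hl₀min
    have halt : ∀ l : Fin n, (l : ℕ) < l₀ → ∃ a ∈ S.erase c, (prefs l a : ℕ) ≤ prefs l c := by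
      intro l hl
      by_contra! h
      have := hl₀min l ⟨hl.trans hl₀T.1, h⟩
      omega
    obtain ⟨Ψ, hΨ, hΨcost⟩ := exists_isCCAssignment_ccCost_le prefs α util hα hcS hΦ.2 hSc
      (fun l hl => hΦS l (hl.trans hl₀T.1)) halt
    refine min_le_of_right_le (le_trans (Nat.sInf_le ⟨l₀, hl₀T.1, rfl⟩) ?_)
    rw [hcost]
    exact (combineCC_mono util ((AcostCC_le_ccCost prefs α util hΨ).trans hΨcost)
      (ccCost_const_le_of_single_crossing util hsc hα hSc hΦS hl₀T.2)).trans_eq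
        (aggCC_filter_lt_eq_combineCC util hl₀T.1.le _).symm
  · have halt : ∀ l : Fin n, (l : ℕ) < i → ∃ a ∈ S.erase c, (prefs l a : ℕ) ≤ prefs l c := by
      intro l hl
      by_contra! h
      exact hT ⟨l, mem_filter.2 ⟨mem_univ l, hl, h⟩⟩
    obtain ⟨Ψ, hΨ, hΨcost⟩ := exists_isCCAssignment_ccCost_le prefs α util hα hcS hΦ.2 hSc hΦS halt
    exact min_le_of_left_le ((AcostCC_le_ccCost prefs α util (hΨ.mono le_rfl (Nat.le_succ t))).trans
      (hcost ▸ hΨcost))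

end Assignments

/-- the dynamic-programming recurrence for Chamberlin--Courant on
single-crossing elections whose first voter ranks `c_1 ≻ ⋯ ≻ c_m`. -/
theorem cc_dp_recurrence {m n : ℕ} (hn : 0 < n)
    (prefs : Fin n → (Fin m ≃ Fin m))
    (hfirst : prefs ⟨0, hn⟩ = Equiv.refl (Fin m))
    (hsc : ∀ a b : Fin m, (prefs ⟨0, hn⟩ a : ℕ) < prefs ⟨0, hn⟩ b →
      ∃ t : ℕ, ∀ v : Fin n, ((prefs v a : ℕ) < prefs v b ↔ (v : ℕ) < t))
    (α : ℕ → ℕ) (hα : Monotone α)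
    (util : Bool) (i j t : ℕ)
    (hi1 : 1 ≤ i) (hj2 : 2 ≤ j) (hjm : j ≤ m) (ht2 : 2 ≤ t) :
    AcostCC prefs α util i j t =
      min (AcostCC prefs α util i (j - 1) t)
        (sInf { w : ℕ | ∃ istar : ℕ, istar < i ∧
          w = combineCC util (AcostCC prefs α util istar (j - 1) (t - 1))
                (aggCC util
                  (Finset.univ.filter (fun l : Fin n => istar ≤ (l : ℕ) ∧ (l : ℕ) < i))
                  (fun l => α ((prefs l ⟨j - 1, by omega⟩ : ℕ) + 1))) }) := by
  obtain ⟨j, rfl⟩ : ∃ j', j = j' + 1 := ⟨j - 1, by omega⟩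
  obtain ⟨t, rfl⟩ : ∃ t', t = t' + 1 := ⟨t - 1, by omega⟩
  simp only [Nat.add_sub_cancel]
  set c : Fin m := ⟨j, by omega⟩
  refine le_antisymm (le_min ?_ ?_) ?_
  · exact AcostCC_anti prefs α util (j := c) c.pos (show 0 < j by omega) (by omega)
      (Nat.le_succ _) le_rfl
  · exact le_csInf ⟨_, 0, by omega, rfl⟩ fun w ⟨k, hk, hw⟩ =>
      hw ▸ AcostCC_succ_le_combineCC prefs α util c (show 0 < j by omega) (by omega) hk.le
  · exact min_le_AcostCC_succ util (fun a b hab => hsc a b (by simpa [hfirst] using hab)) hα c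
end

section
/- For every set C = {c_1, ..., c_m} of candidates and every positive integer s, the profile V = V_1 + ⋯ + V_m, where each V_i consists of s identical voters with preference order c_i ≻ c_{i+1} ≻ ⋯ ≻ c_m ≻ c_{i−1} ≻ ⋯ ≻ c_2 ≻ c_1, is single-crossing; moreover each candidate c_i is ranked first by exactly s voters, and the preference order of the last voter is the reverse of the preference order of the first voter. -/
/-- The profile of Lemma `all-m`: `m` blocks of `s` identical voters; every voter
in block `b` (blocks are 0-indexed, voter `v` lies in block `v / s`) has preference
order `c_b ≻ c_{b+1} ≻ ⋯ ≻ c_{m-1} ≻ c_{b-1} ≻ ⋯ ≻ c_0` (candidates 0-indexed).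
`posR m s v c` is the (1-based) rank of candidate `c` for voter `v`. -/
def posR (m s : ℕ) (v : Fin (m * s)) (c : Fin m) : ℕ :=
  if (v : ℕ) / s ≤ (c : ℕ) then (c : ℕ) - (v : ℕ) / s + 1 else m - (c : ℕ)

lemma posR_block_lt (m s : ℕ) (hs : 0 < s) (v : Fin (m * s)) : (v : ℕ) / s < m :=
  Nat.div_lt_of_lt_mul (Nat.lt_of_lt_of_le v.isLt (Nat.le_of_eq (Nat.mul_comm m s)))

lemma posR_eq_one_iff (m s : ℕ) (hs : 0 < s) (v : Fin (m * s)) (c : Fin m) :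
    posR m s v c = 1 ↔ (v : ℕ) / s = (c : ℕ) := by
  have hk := posR_block_lt m s hs v
  have hc := c.isLt
  unfold posR
  split_ifs <;> omega

/-- this profile is single-crossing, every candidate is ranked first
by exactly `s` voters, and the last voter's preference order is the reverse of the
first voter's. -/
theorem rotation_profile_single_crossing_narcissistic (m s : ℕ)
    (hm : 0 < m) (hs : 0 < s) :
    (∀ a b : Fin m,
        posR m s ⟨0, Nat.mul_pos hm hs⟩ a < posR m s ⟨0, Nat.mul_pos hm hs⟩ b →
        ∃ t : ℕ, ∀ v : Fin (m * s), posR m s v a < posR m s v b ↔ (v : ℕ) < t) ∧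
    (∀ c : Fin m,
        (Finset.univ.filter (fun v : Fin (m * s) => posR m s v c = 1)).card = s) ∧
    (∀ a b : Fin m,
        posR m s ⟨0, Nat.mul_pos hm hs⟩ a < posR m s ⟨0, Nat.mul_pos hm hs⟩ b →
        posR m s ⟨m * s - 1, Nat.sub_lt (Nat.mul_pos hm hs) one_pos⟩ b < posR m s ⟨m * s - 1, Nat.sub_lt (Nat.mul_pos hm hs) one_pos⟩ a) := by
  refine ⟨?_, ?_, ?_⟩
  · intro a b hab
    have ha := a.isLt
    have hb := b.isLt
    simp only [posR, Nat.zero_div] at hab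
    have hab' : (a : ℕ) < b := by split_ifs at hab <;> omega
    refine ⟨((a : ℕ) + 1) * s, fun v => ?_⟩
    have hk := posR_block_lt m s hs v
    have hdiv : ((v : ℕ) < ((a : ℕ) + 1) * s) ↔ (v : ℕ) / s < (a : ℕ) + 1 :=
      (Nat.div_lt_iff_lt_mul hs).symm
    rw [hdiv]
    simp only [posR]
    split_ifs <;> omega
  · intro c
    have hc := c.isLt
    apply Finset.card_eq_of_bijective
      (fun i hi => ⟨(c : ℕ) * s + i, by
        have : ((c : ℕ) + 1) * s ≤ m * s := Nat.mul_le_mul_right s hc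
        nlinarith⟩)
    · intro v hv
      rw [Finset.mem_filter, posR_eq_one_iff m s hs] at hv
      obtain ⟨-, hv⟩ := hv
      have hmlt := Nat.mod_lt (v : ℕ) hs
      have hmod := Nat.div_add_mod (v : ℕ) s
      have hcs : (c : ℕ) * s = s * ((v : ℕ) / s) := by rw [hv, Nat.mul_comm]
      refine ⟨(v : ℕ) % s, hmlt, ?_⟩
      apply Fin.ext
      simp only
      omega
    · intro i hi
      rw [Finset.mem_filter]
      refine ⟨Finset.mem_univ _, ?_⟩
      rw [posR_eq_one_iff m s hs]
      simp only
      rw [Nat.mul_comm (c : ℕ) s, Nat.mul_add_div hs, Nat.div_eq_of_lt hi]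
      omega
    · intro i j hi hj hij
      have := Fin.val_eq_of_eq hij
      simp only at this
      omega
  · intro a b hab
    have ha := a.isLt
    have hb := b.isLt
    simp only [posR, Nat.zero_div] at hab
    have hab' : (a : ℕ) < b := by split_ifs at hab <;> omega
    have hms : 0 < m * s := Nat.mul_pos hm hs
    have hL : (m * s - 1) / s = m - 1 := by
      apply Nat.div_eq_of_lt_le
      · rw [Nat.sub_mul]
        omega
      · have h1 : m - 1 + 1 = m := by omega
        rw [h1]
        omega
    simp only [posR, hL]
    split_ifs <;> omega
end

section
/- Every single-crossing narcissistic election satisfies: for any three voters v_i, v_j, v_q with i < j < q in the single-crossing order, if v_q ranks candidate c first, then for every candidate c', if v_i prefers c to c' then v_j prefers c to c'. (Equivalently, v_j ranks c at least as highly as v_i does.) -/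
/-- In a single-crossing narcissistic election, if `i < j < q` and
voter `v_q` ranks candidate `c` first, then for every candidate `c'`, if `v_i`
prefers `c` to `c'` then so does `v_j`. -/
theorem sc_narcissistic_sandwich {n : ℕ} {C : Type*} (hn : 0 < n)
    (pos : Fin n → C → ℕ)
    (hinj : ∀ v : Fin n, Function.Injective (pos v))
    (hsc : ∀ a b : C, pos ⟨0, hn⟩ a < pos ⟨0, hn⟩ b →
      ∃ t : ℕ, ∀ v : Fin n, pos v a < pos v b ↔ (v : ℕ) < t)
    (hnarc : ∀ c : C, ∃ v : Fin n, ∀ c' : C, c' ≠ c → pos v c < pos v c')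
    (i j q : Fin n) (hij : i < j) (hjq : j < q)
    (c : C) (hq : ∀ c' : C, c' ≠ c → pos q c < pos q c') :
    ∀ c' : C, pos i c < pos i c' → pos j c < pos j c' := by
  intro c' hi
  have hne : c' ≠ c := by
    intro h; subst h; exact lt_irrefl _ hi
  have hq' := hq c' hne
  have hne0 : pos ⟨0, hn⟩ c ≠ pos ⟨0, hn⟩ c' := fun h => hne (hinj _ h).symm
  rcases hne0.lt_or_gt with h0 | h0
  · obtain ⟨t, ht⟩ := hsc c c' h0
    have hqt : (q : ℕ) < t := (ht q).1 hq'
    exact (ht j).2 (lt_trans (Fin.lt_iff_val_lt_val.mp hjq) hqt)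
  · obtain ⟨t, ht⟩ := hsc c' c h0
    have hit : ¬ (i : ℕ) < t := fun h => absurd ((ht i).2 h) (not_lt.mpr hi.le)
    have hjt : ¬ (j : ℕ) < t := fun h => hit (lt_trans (Fin.lt_iff_val_lt_val.mp hij) h)
    have : ¬ pos j c' < pos j c := fun h => hjt ((ht j).1 h)
    have hnej : pos j c ≠ pos j c' := fun h => hne (hinj _ h).symm
    omega
end

section
/- Let E = (C, V) be a single-crossing narcissistic election with C = {c_1, ..., c_m}, V = (v_1, ..., v_n), where v_1 has preference order c_1 ≻ ⋯ ≻ c_m. Then for every k ∈ [m] and every dissatisfaction function α, there exists an optimal k-Monroe assignment Φ under α-ℓ_∞-Monroe with the contiguous blocks property: for each c_i with Φ^{-1}(c_i) ≠ ∅ there exist t_i ≤ t_i' with Φ^{-1}(c_i) = {v_{t_i}, ..., v_{t_i'}}, and for i < j with Φ^{-1}(c_i), Φ^{-1}(c_j) both nonempty, t_i' < t_j. -/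
set_option linter.unusedVariables false

-- rank-as-card lemma
lemma aux_pos_card {m : ℕ} (e : Fin m ≃ Fin m) (b : Fin m) :
    (Finset.univ.filter fun d => (e d : ℕ) < (e b : ℕ)).card = (e b : ℕ) := by
  have h : (Finset.univ.filter fun d => (e d : ℕ) < (e b : ℕ)).card
      = (Finset.Iio (e b)).card := by
    apply Finset.card_bij (fun d _ => e d)
    · intro a ha
      simp only [Finset.mem_filter] at ha
      exact Finset.mem_Iio.2 (Fin.lt_def.2 ha.2)
    · intro a _ b _ h
      exact e.injective h
    · intro c hc
      refine ⟨e.symm c, ?_, by simp⟩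
      simp only [Finset.mem_filter, Finset.mem_univ, true_and, Equiv.apply_symm_apply]
      exact Fin.lt_def.1 (Finset.mem_Iio.1 hc)
  rw [h, Fin.card_Iio]

-- distinct positions
lemma aux_pos_ne {m n : ℕ} (prefs : Fin n → (Fin m ≃ Fin m)) (v : Fin n)
    {a b : Fin m} (hab : a ≠ b) : (prefs v a : ℕ) ≠ (prefs v b : ℕ) :=
  fun h => hab ((prefs v).injective (Fin.val_injective h))

-- single-peakedness from narcissism + single-crossing
lemma aux_sp {m n : ℕ} (prefs : Fin n → (Fin m ≃ Fin m))
    (hsc : ∀ a b : Fin m, (a : ℕ) < (b : ℕ) →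
      ∃ t : ℕ, ∀ v : Fin n, ((prefs v a : ℕ) < prefs v b ↔ (v : ℕ) < t))
    (hnarc : ∀ c : Fin m, ∃ v : Fin n, (prefs v c : ℕ) = 0)
    (v : Fin n) (a b c : Fin m) (hab : (a : ℕ) < b) (hbc : (b : ℕ) < c)
    (h1 : (prefs v a : ℕ) < prefs v b) (h2 : (prefs v c : ℕ) < prefs v b) : False := by
  obtain ⟨u, hu⟩ := hnarc b
  have hab' : a ≠ b := fun h => by simp [h] at hab
  have hcb' : c ≠ b := fun h => by simp [h] at hbc
  obtain ⟨t1, ht1⟩ := hsc a b hab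
  obtain ⟨t2, ht2⟩ := hsc b c hbc
  -- u ranks b first, so prefs u b < prefs u a and prefs u b < prefs u c
  have hua : (prefs u b : ℕ) < prefs u a := by
    rw [hu]; exact Nat.pos_of_ne_zero fun h => aux_pos_ne prefs u hab' (by omega)
  have huc : (prefs u b : ℕ) < prefs u c := by
    rw [hu]; exact Nat.pos_of_ne_zero fun h => aux_pos_ne prefs u hcb' (by omega)
  have h3 : (v : ℕ) < t1 := (ht1 v).1 h1
  have h4 : ¬ ((u : ℕ) < t1) := fun h => absurd ((ht1 u).2 h) (by omega)
  have h5 : (u : ℕ) < t2 := (ht2 u).1 huc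
  have h6 : ¬ ((v : ℕ) < t2) := fun h => absurd ((ht2 v).2 h) (by omega)
  omega

-- comparison of ranks via subset of better-ranked candidates
lemma aux_pos_le {m n : ℕ} (prefs : Fin n → (Fin m ≃ Fin m)) (v w : Fin n) (b : Fin m)
    (h : ∀ d : Fin m, (prefs w d : ℕ) < prefs w b → (prefs v d : ℕ) < prefs v b) :
    (prefs w b : ℕ) ≤ (prefs v b : ℕ) := by
  rw [← aux_pos_card (prefs w) b, ← aux_pos_card (prefs v) b]
  apply Finset.card_le_card
  intro d hd
  simp only [Finset.mem_filter, Finset.mem_univ, true_and] at hd ⊢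
  exact h d hd

-- KEY exchange lemma
lemma aux_key {m n : ℕ} (prefs : Fin n → (Fin m ≃ Fin m))
    (hsc : ∀ a b : Fin m, (a : ℕ) < (b : ℕ) →
      ∃ t : ℕ, ∀ v : Fin n, ((prefs v a : ℕ) < prefs v b ↔ (v : ℕ) < t))
    (hnarc : ∀ c : Fin m, ∃ v : Fin n, (prefs v c : ℕ) = 0)
    (v w : Fin n) (hvw : (v : ℕ) ≤ w) (a b : Fin m) (hab : (a : ℕ) ≤ b) :
    (prefs v a : ℕ) ≤ max (prefs v b : ℕ) (prefs w a : ℕ) ∧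
      (prefs w b : ℕ) ≤ max (prefs v b : ℕ) (prefs w a : ℕ) := by
  rcases eq_or_lt_of_le hab with heq | hab
  · have : a = b := Fin.val_injective heq
    subst this
    exact ⟨le_max_left _ _, le_max_right _ _⟩
  have hab' : a ≠ b := fun h => by simp [h] at hab
  obtain ⟨t, ht⟩ := hsc a b hab
  by_cases hv : (v : ℕ) < t
  · have h1 : (prefs v a : ℕ) < prefs v b := (ht v).2 hv
    refine ⟨le_trans (le_of_lt h1) (le_max_left _ _), ?_⟩
    by_cases hw : (w : ℕ) < t
    · -- w also prefers a to b : show prefs w b ≤ prefs v b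
      have h2 : (prefs w a : ℕ) < prefs w b := (ht w).2 hw
      refine le_trans (aux_pos_le prefs v w b ?_) (le_max_left _ _)
      intro d hd
      rcases lt_trichotomy (d : ℕ) (b : ℕ) with hdb | hdb | hdb
      · obtain ⟨t', ht'⟩ := hsc d b hdb
        exact (ht' v).2 (lt_of_le_of_lt hvw ((ht' w).1 hd))
      · have : d = b := Fin.val_injective hdb
        subst this; omega
      · exact (aux_sp prefs hsc hnarc w a b d hab hdb h2 hd).elim
    · -- w prefers b to a
      have h2 : ¬ ((prefs w a : ℕ) < prefs w b) := fun h => hw ((ht w).1 h)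
      have := aux_pos_ne prefs w hab'
      exact le_trans (by omega) (le_max_right _ _)
  · -- v (hence w) prefers b to a
    have hw : ¬ ((w : ℕ) < t) := fun h => hv (by omega)
    have h1 : ¬ ((prefs v a : ℕ) < prefs v b) := fun h => hv ((ht v).1 h)
    have h2 : ¬ ((prefs w a : ℕ) < prefs w b) := fun h => hw ((ht w).1 h)
    have hvne := aux_pos_ne prefs v hab'
    have hwne := aux_pos_ne prefs w hab'
    refine ⟨?_, le_trans (by omega) (le_max_right _ _)⟩
    -- show prefs v a ≤ prefs w a
    refine le_trans (aux_pos_le prefs w v a ?_) (le_max_right _ _)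
    intro d hd
    rcases lt_trichotomy (d : ℕ) (a : ℕ) with hda | hda | hda
    · exact (aux_sp prefs hsc hnarc v d a b hda hab hd (by omega)).elim
    · have : d = a := Fin.val_injective hda
      subst this; omega
    · obtain ⟨t'', ht''⟩ := hsc a d hda
      have : ¬ ((v : ℕ) < t'') := fun h => absurd ((ht'' v).2 h) (by omega)
      have h3 : ¬ ((prefs w a : ℕ) < prefs w d) := fun h => absurd ((ht'' w).1 h) (by omega)
      have := aux_pos_ne prefs w (fun h => by simp [h] at hda : a ≠ d)
      omega

-- monotone from adjacent comparisons
lemma aux_mono_of_adj {m n : ℕ} {f : Fin n → Fin m}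
    (h : ∀ (i : ℕ) (hi : i + 1 < n), f ⟨i, by omega⟩ ≤ f ⟨i + 1, hi⟩) : Monotone f := by
  have key : ∀ (j : ℕ) (hj : j < n) (i : ℕ) (hi : i < n), i ≤ j → f ⟨i, hi⟩ ≤ f ⟨j, hj⟩ := by
    intro j
    induction j with
    | zero =>
      intro hj i hi hij
      have : i = 0 := by omega
      subst this
      exact le_refl _
    | succ j ih =>
      intro hj i hi hij
      rcases Nat.lt_or_ge i (j+1) with h' | h'
      · exact le_trans (ih (by omega) i hi (by omega)) (h j hj)
      · have : i = j + 1 := by omega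
        subst this
        exact le_of_eq rfl
  intro a b hab
  have := key (b : ℕ) b.isLt (a : ℕ) a.isLt hab
  simpa using this

-- fibers are preserved under composing with swap
lemma aux_fiber_swap {m n : ℕ} (Ψ : Fin n → Fin m) (v w : Fin n) (c : Fin m) :
    (Finset.univ.filter fun u => Ψ (Equiv.swap v w u) = c).card
      = (Finset.univ.filter fun u => Ψ u = c).card := by
  apply Finset.card_bij' (fun u _ => Equiv.swap v w u) (fun u _ => Equiv.swap v w u)
  · intro u hu
    simp only [Finset.mem_filter, Finset.mem_univ, true_and] at hu ⊢
    exact hu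
  · intro u hu
    simp only [Finset.mem_filter, Finset.mem_univ, true_and] at hu ⊢
    rw [Equiv.swap_apply_self]
    exact hu
  · intro u _; exact Equiv.swap_apply_self _ _ _
  · intro u _; exact Equiv.swap_apply_self _ _ _

-- splitting a sum over two distinguished points
lemma aux_sum_split {n : ℕ} (v w : Fin n) (hvw : v ≠ w) (g : Fin n → ℕ) :
    ∑ u, g u = g v + g w + ∑ u ∈ (Finset.univ.erase v).erase w, g u := by
  have hw : w ∈ Finset.univ.erase v := Finset.mem_erase.2 ⟨fun h => hvw h.symm, Finset.mem_univ _⟩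
  rw [← Finset.add_sum_erase _ g (Finset.mem_univ v), ← Finset.add_sum_erase _ g hw, ← add_assoc]

-- swapping an inversion does not increase the egalitarian cost
lemma aux_swap_cost {m n : ℕ} (prefs : Fin n → (Fin m ≃ Fin m))
    (hsc : ∀ a b : Fin m, (a : ℕ) < (b : ℕ) →
      ∃ t : ℕ, ∀ v : Fin n, ((prefs v a : ℕ) < prefs v b ↔ (v : ℕ) < t))
    (hnarc : ∀ c : Fin m, ∃ v : Fin n, (prefs v c : ℕ) = 0)
    (α : ℕ → ℕ) (hα : Monotone α)
    (Ψ : Fin n → Fin m) (v w : Fin n) (hvw : (v : ℕ) ≤ w) (hΨ : (Ψ w : ℕ) ≤ Ψ v) :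
    (Finset.univ.sup fun u : Fin n => α ((prefs u (Ψ (Equiv.swap v w u)) : ℕ) + 1)) ≤
      (Finset.univ.sup fun u : Fin n => α ((prefs u (Ψ u) : ℕ) + 1)) := by
  have key := aux_key prefs hsc hnarc v w hvw (Ψ w) (Ψ v) hΨ
  have hv' : α ((prefs v (Ψ v) : ℕ) + 1) ≤
      Finset.univ.sup fun u : Fin n => α ((prefs u (Ψ u) : ℕ) + 1) :=
    Finset.le_sup (f := fun u : Fin n => α ((prefs u (Ψ u) : ℕ) + 1)) (Finset.mem_univ v)
  have hw' : α ((prefs w (Ψ w) : ℕ) + 1) ≤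
      Finset.univ.sup fun u : Fin n => α ((prefs u (Ψ u) : ℕ) + 1) :=
    Finset.le_sup (f := fun u : Fin n => α ((prefs u (Ψ u) : ℕ) + 1)) (Finset.mem_univ w)
  apply Finset.sup_le
  intro u _
  by_cases huv : u = v
  · rw [huv, Equiv.swap_apply_left]
    rcases le_max_iff.1 key.1 with h | h
    · exact le_trans (hα (by omega)) hv'
    · exact le_trans (hα (by omega)) hw'
  by_cases huw : u = w
  · rw [huw, Equiv.swap_apply_right]
    rcases le_max_iff.1 key.2 with h | h
    · exact le_trans (hα (by omega)) hv'
    · exact le_trans (hα (by omega)) hw'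
  · rw [Equiv.swap_apply_of_ne_of_ne huv huw]
    exact Finset.le_sup (f := fun u : Fin n => α ((prefs u (Ψ u) : ℕ) + 1))
      (Finset.mem_univ u)

-- the weighted measure strictly increases when swapping an adjacent inversion
lemma aux_measure {m n : ℕ} (Ψ : Fin n → Fin m) (v w : Fin n)
    (hvw : (v : ℕ) < w) (hΨ : (Ψ w : ℕ) < Ψ v) :
    (∑ u : Fin n, (u : ℕ) * (Ψ u : ℕ))
      < ∑ u : Fin n, (u : ℕ) * (Ψ (Equiv.swap v w u) : ℕ) := by
  have hne : v ≠ w := fun h => by subst h; omega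
  rw [aux_sum_split v w hne (fun u => (u : ℕ) * (Ψ u : ℕ)),
    aux_sum_split v w hne (fun u => (u : ℕ) * (Ψ (Equiv.swap v w u) : ℕ))]
  have hsum : ∑ u ∈ (Finset.univ.erase v).erase w, (u : ℕ) * (Ψ (Equiv.swap v w u) : ℕ)
      = ∑ u ∈ (Finset.univ.erase v).erase w, (u : ℕ) * (Ψ u : ℕ) := by
    apply Finset.sum_congr rfl
    intro u hu
    simp only [Finset.mem_erase] at hu
    rw [Equiv.swap_apply_of_ne_of_ne hu.2.1 hu.1]
  rw [hsum, Equiv.swap_apply_left, Equiv.swap_apply_right]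
  have h : (v : ℕ) * (Ψ v : ℕ) + (w : ℕ) * (Ψ w : ℕ)
      < (v : ℕ) * (Ψ w : ℕ) + (w : ℕ) * (Ψ v : ℕ) := by
    obtain ⟨p, hp⟩ := Nat.exists_eq_add_of_lt hvw
    obtain ⟨q, hq⟩ := Nat.exists_eq_add_of_lt hΨ
    rw [hp, hq]
    ring_nf
    nlinarith
  omega

-- every assignment can be sorted into a monotone one with the same fibers
-- and no larger egalitarian cost
lemma aux_sort {m n : ℕ} (hn : 0 < n) (hm : 0 < m)
    (prefs : Fin n → (Fin m ≃ Fin m))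
    (hsc : ∀ a b : Fin m, (a : ℕ) < (b : ℕ) →
      ∃ t : ℕ, ∀ v : Fin n, ((prefs v a : ℕ) < prefs v b ↔ (v : ℕ) < t))
    (hnarc : ∀ c : Fin m, ∃ v : Fin n, (prefs v c : ℕ) = 0)
    (α : ℕ → ℕ) (hα : Monotone α) :
    ∀ (K : ℕ) (Ψ : Fin n → Fin m),
      n * n * m ≤ (∑ u : Fin n, (u : ℕ) * (Ψ u : ℕ)) + K →
      ∃ Φ : Fin n → Fin m, Monotone Φ ∧
        (∀ c, (Finset.univ.filter fun u => Φ u = c).card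
          = (Finset.univ.filter fun u => Ψ u = c).card) ∧
        (Finset.univ.sup fun u : Fin n => α ((prefs u (Φ u) : ℕ) + 1)) ≤
          (Finset.univ.sup fun u : Fin n => α ((prefs u (Ψ u) : ℕ) + 1)) := by
  intro K
  induction K with
  | zero =>
    intro Ψ hK
    -- impossible: the measure is strictly below the bound
    have hbound : (∑ u : Fin n, (u : ℕ) * (Ψ u : ℕ)) < n * n * m := by
      calc (∑ u : Fin n, (u : ℕ) * (Ψ u : ℕ))
          ≤ ∑ _u : Fin n, (n - 1) * (m - 1) := by
            apply Finset.sum_le_sum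
            intro u _
            exact Nat.mul_le_mul (by omega) (by have := (Ψ u).isLt; omega)
        _ = n * ((n - 1) * (m - 1)) := by
            rw [Finset.sum_const, Finset.card_univ, Fintype.card_fin, smul_eq_mul]
        _ < n * n * m := by
            rw [mul_assoc]
            apply mul_lt_mul_of_pos_left _ hn
            calc (n - 1) * (m - 1) ≤ (n - 1) * m := Nat.mul_le_mul_left _ (by omega)
              _ < n * m := mul_lt_mul_of_pos_right (by omega) hm
    omega
  | succ K ih =>
    intro Ψ hK
    by_cases hmono : Monotone Ψ
    · exact ⟨Ψ, hmono, fun c => rfl, le_refl _⟩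
    · -- find an adjacent inversion
      have hadj : ∃ (i : ℕ) (hi : i + 1 < n), Ψ ⟨i + 1, hi⟩ < Ψ ⟨i, by omega⟩ := by
        by_contra hcon
        push_neg at hcon
        exact hmono (aux_mono_of_adj fun i hi => hcon i hi)
      obtain ⟨i, hi, hlt⟩ := hadj
      set v : Fin n := ⟨i, by omega⟩ with hv
      set w : Fin n := ⟨i + 1, hi⟩ with hw
      have hvw : (v : ℕ) < w := by simp [hv, hw]
      have hΨlt : (Ψ w : ℕ) < Ψ v := hlt
      obtain ⟨Φ, hΦmono, hΦfib, hΦcost⟩ := ih (fun u => Ψ (Equiv.swap v w u)) (by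
        show n * n * m ≤ (∑ u : Fin n, (u : ℕ) * (Ψ (Equiv.swap v w u) : ℕ)) + K
        have := aux_measure Ψ v w hvw hΨlt
        omega)
      refine ⟨Φ, hΦmono, ?_, ?_⟩
      · intro c
        rw [hΦfib c, aux_fiber_swap]
      · exact le_trans hΦcost
          (aux_swap_cost prefs hsc hnarc α hα Ψ v w (le_of_lt hvw) (le_of_lt hΨlt))

-- ceiling division characterization
lemma aux_ceil_le {k x v : ℕ} (hk : 0 < k) : (x + k - 1) / k ≤ v ↔ x ≤ k * v := by
  rw [Nat.div_le_iff_le_mul_add_pred hk]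
  generalize k * v = M
  omega

lemma aux_div_eq_iff {n x j : ℕ} (hn : 0 < n) : x / n = j ↔ n * j ≤ x ∧ x < n * j + n := by
  constructor
  · rintro rfl
    have hq := Nat.div_add_mod x n
    have hr := Nat.mod_lt x hn
    omega
  · rintro ⟨h1, h2⟩
    have hq := Nat.div_add_mod x n
    have hr := Nat.mod_lt x hn
    rcases lt_trichotomy (x / n) j with h | h | h
    · have : n * (x / n + 1) ≤ n * j := Nat.mul_le_mul_left n h
      have : n * (x / n) + n ≤ n * j := by rw [Nat.mul_add, Nat.mul_one] at this; omega
      omega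
    · exact h
    · have : n * (j + 1) ≤ n * (x / n) := Nat.mul_le_mul_left n h
      have : n * j + n ≤ n * (x / n) := by rw [Nat.mul_add, Nat.mul_one] at this; omega
      omega

-- counting a Fin-interval
lemma aux_card_interval {n : ℕ} (a b : ℕ) (hb : b ≤ n) :
    (Finset.univ.filter fun v : Fin n => a ≤ (v : ℕ) ∧ (v : ℕ) < b).card = b - a := by
  have h : (Finset.univ.filter fun v : Fin n => a ≤ (v : ℕ) ∧ (v : ℕ) < b).card
      = (Finset.Ico a b).card := by
    refine Finset.card_bij (fun v _ => (v : ℕ)) ?_ ?_ ?_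
    · intro v hv
      simp only [Finset.mem_filter, Finset.mem_univ, true_and] at hv
      exact Finset.mem_Ico.2 hv
    · intro x _ y _ h
      exact Fin.val_injective h
    · intro x hx
      obtain ⟨h1, h2⟩ := Finset.mem_Ico.1 hx
      refine ⟨⟨x, by omega⟩, ?_, rfl⟩
      simp only [Finset.mem_filter, Finset.mem_univ, true_and]
      exact ⟨h1, h2⟩
  rw [h, Nat.card_Ico]

-- the base contiguous valid assignment
lemma aux_base {m n k : ℕ} (hn : 0 < n) (hk1 : 1 ≤ k) (hkm : k ≤ m) (hkn : k ≤ n) :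
    ∃ Φ : Fin n → Fin m, Monotone Φ ∧
      (Finset.univ.image Φ).card = k ∧
      ∀ c : Fin m,
        (Finset.univ.filter (fun v => Φ v = c)).card = 0 ∨
        (n / k ≤ (Finset.univ.filter (fun v => Φ v = c)).card ∧
          (Finset.univ.filter (fun v => Φ v = c)).card ≤ (n + k - 1) / k) := by
  have hk : 0 < k := hk1
  have hΦlt : ∀ v : Fin n, v * k / n < k := by
    intro v
    rw [Nat.div_lt_iff_lt_mul hn]
    calc (v : ℕ) * k ≤ (n - 1) * k := Nat.mul_le_mul_right k (by have := v.isLt; omega)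
      _ < n * k := mul_lt_mul_of_pos_right (by omega) hk
      _ = k * n := mul_comm n k
  set Φ : Fin n → Fin m := fun v => ⟨v * k / n, lt_of_lt_of_le (hΦlt v) hkm⟩ with hΦ
  -- ceiling thresholds
  set L : ℕ → ℕ := fun j => (j * n + k - 1) / k with hL
  have hLle : ∀ j v : ℕ, L j ≤ v ↔ j * n ≤ k * v := fun j v => aux_ceil_le hk
  have hkL1 : ∀ j, j * n ≤ k * L j := fun j => (hLle j (L j)).1 (le_refl _)
  have hkL2 : ∀ j, k * L j ≤ j * n + k - 1 := by
    intro j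
    have := Nat.div_mul_le_self (j * n + k - 1) k
    calc k * L j = L j * k := mul_comm _ _
      _ ≤ j * n + k - 1 := Nat.div_mul_le_self _ _
  -- membership characterization
  have hmem : ∀ (v : Fin n) (j : ℕ), j < k →
      ((v : ℕ) * k / n = j ↔ (L j ≤ (v : ℕ) ∧ (v : ℕ) < L (j + 1))) := by
    intro v j _
    rw [aux_div_eq_iff hn]
    have e1 : L j ≤ (v : ℕ) ↔ n * j ≤ (v : ℕ) * k := by
      rw [hLle j v, mul_comm n j, mul_comm k (v : ℕ)]
    have e2 : (v : ℕ) < L (j + 1) ↔ (v : ℕ) * k < n * j + n := by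
      rw [← not_le, ← not_le, hLle (j + 1) v]
      constructor
      · intro h
        by_contra h2
        exact h (by rw [mul_comm k (v : ℕ)]; calc (j+1) * n = n * j + n := by ring
                      _ ≤ (v : ℕ) * k := by omega)
      · intro h h2
        rw [mul_comm k (v : ℕ)] at h2
        have : (j + 1) * n = n * j + n := by ring
        omega
    rw [e1, e2]
  -- L (j+1) ≤ n for j < k
  have hLn : ∀ j, j ≤ k → L j ≤ n := by
    intro j hj
    rw [hLle]
    calc j * n ≤ k * n := Nat.mul_le_mul_right n hj
      _ = k * n := rfl
  -- fibers
  have hfib : ∀ c : Fin m, (c : ℕ) < k →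
      (Finset.univ.filter (fun v => Φ v = c)).card = L ((c : ℕ) + 1) - L (c : ℕ) := by
    intro c hc
    have : (Finset.univ.filter (fun v => Φ v = c))
        = (Finset.univ.filter fun v : Fin n => L (c : ℕ) ≤ (v : ℕ) ∧ (v : ℕ) < L ((c : ℕ) + 1)) := by
      apply Finset.filter_congr
      intro v _
      simp only [hΦ, Fin.ext_iff]
      exact (hmem v (c : ℕ) hc)
    rw [this, aux_card_interval _ _ (hLn _ (by omega))]
  have hfib0 : ∀ c : Fin m, k ≤ (c : ℕ) →
      (Finset.univ.filter (fun v => Φ v = c)).card = 0 := by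
    intro c hc
    rw [Finset.card_eq_zero, Finset.filter_eq_empty_iff]
    intro v _
    simp only [hΦ, Fin.ext_iff]
    have := hΦlt v
    omega
  refine ⟨Φ, ?_, ?_, ?_⟩
  · -- monotone
    intro v w hvw
    simp only [hΦ, Fin.mk_le_mk]
    exact Nat.div_le_div_right (Nat.mul_le_mul_right k hvw)
  · -- image card
    have himg : Finset.univ.image Φ = Finset.univ.filter (fun c : Fin m => (c : ℕ) < k) := by
      apply Finset.ext
      intro c
      simp only [Finset.mem_image, Finset.mem_filter, Finset.mem_univ, true_and]
      constructor
      · rintro ⟨v, _, rfl⟩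
        exact hΦlt v
      · intro hc
        have hLlt : L (c : ℕ) < n := by
          have h2 := hkL2 (c : ℕ)
          have : k * L (c : ℕ) < k * n := by
            calc k * L (c : ℕ) ≤ (c : ℕ) * n + k - 1 := h2
              _ ≤ (k - 1) * n + k - 1 := by
                  have : (c : ℕ) * n ≤ (k - 1) * n := Nat.mul_le_mul_right n (by omega)
                  omega
              _ < k * n := by
                  have : (k - 1) * n + n = k * n := by
                    have : (k - 1 + 1) * n = k * n := by rw [Nat.sub_add_cancel hk]
                    rw [← this]; ring
                  omega
          exact Nat.lt_of_mul_lt_mul_left this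
        refine ⟨⟨L (c : ℕ), hLlt⟩, ?_⟩
        simp only [hΦ, Fin.ext_iff]
        rw [hmem ⟨L (c : ℕ), hLlt⟩ (c : ℕ) hc]
        refine ⟨le_refl _, ?_⟩
        rw [← not_le, hLle]
        intro hcon
        have hcon' : ((c : ℕ) + 1) * n ≤ k * L (c : ℕ) := hcon
        have h1 := hkL2 (c : ℕ)
        have : ((c : ℕ) + 1) * n = (c : ℕ) * n + n := by ring
        omega
    rw [himg]
    have : (Finset.univ.filter (fun c : Fin m => (c : ℕ) < k)).card = (Finset.range k).card := by
      refine Finset.card_bij (fun c _ => (c : ℕ)) ?_ ?_ ?_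
      · intro c hc
        simp only [Finset.mem_filter, Finset.mem_univ, true_and] at hc
        exact Finset.mem_range.2 hc
      · intro x _ y _ h
        exact Fin.val_injective h
      · intro x hx
        have hx' := Finset.mem_range.1 hx
        refine ⟨⟨x, by omega⟩, ?_, rfl⟩
        simp only [Finset.mem_filter, Finset.mem_univ, true_and]
        exact hx'
    rw [this, Finset.card_range]
  · -- fiber sizes
    intro c
    rcases Nat.lt_or_ge (c : ℕ) k with hc | hc
    · right
      rw [hfib c hc]
      set j := (c : ℕ)
      set a := L j with ha
      set b := L (j + 1) with hb
      have h1 : j * n ≤ k * a := hkL1 j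
      have h2 : k * a ≤ j * n + k - 1 := hkL2 j
      have h3 : (j + 1) * n ≤ k * b := hkL1 (j + 1)
      have h4 : k * b ≤ (j + 1) * n + k - 1 := hkL2 (j + 1)
      have hjn : (j + 1) * n = j * n + n := by ring
      have hab : a ≤ b := by
        have : k * a < k * b := by omega
        exact le_of_lt (Nat.lt_of_mul_lt_mul_left this)
      obtain ⟨d, hd⟩ := Nat.exists_eq_add_of_le hab
      have hkd : k * b = k * a + k * d := by rw [hd]; ring
      constructor
      · -- lower bound n / k ≤ b - a
        have hq := Nat.div_add_mod n k
        have hr := Nat.mod_lt n hk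
        by_contra hcon
        push_neg at hcon
        have hdq : d ≤ n / k - 1 := by omega
        have : k * d ≤ k * (n / k - 1) := Nat.mul_le_mul_left k hdq
        have hk2 : k * (n / k - 1) + k = k * (n / k) := by
          have h5 : 0 < n / k := Nat.div_pos hkn hk
          have : k * (n / k - 1 + 1) = k * (n / k) := by rw [Nat.sub_add_cancel h5]
          rw [← this]; ring
        omega
      · -- upper bound b - a ≤ (n + k - 1) / k
        set Q := (n + k - 1) / k with hQ
        have h5 : n ≤ k * Q := (aux_ceil_le hk).1 (le_refl _)
        by_contra hcon
        push_neg at hcon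
        have hdQ : Q + 1 ≤ d := by omega
        have : k * (Q + 1) ≤ k * d := Nat.mul_le_mul_left k hdQ
        have h6 : k * (Q + 1) = k * Q + k := by ring
        omega
    · left; exact hfib0 c hc

-- image is determined by fiber cardinalities
lemma aux_image_eq {m n : ℕ} (Φ Ψ : Fin n → Fin m)
    (h : ∀ c, (Finset.univ.filter fun u => Φ u = c).card
      = (Finset.univ.filter fun u => Ψ u = c).card) :
    Finset.univ.image Φ = Finset.univ.image Ψ := by
  have key : ∀ (f : Fin n → Fin m) (c : Fin m),
      c ∈ Finset.univ.image f ↔ (Finset.univ.filter fun v => f v = c).card ≠ 0 := by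
    intro f c
    rw [Ne, Finset.card_eq_zero, ← Ne, ← Finset.nonempty_iff_ne_empty]
    simp [Finset.filter_nonempty_iff, Finset.mem_image]
  ext c
  rw [key, key, h c]

/-- For a single-crossing narcissistic election whose first voter ranks
`c_1 ≻ ⋯ ≻ c_m` (candidates are `Fin m`, rank of `c` for `v` is `(prefs v c : ℕ) + 1`),
for every `k ∈ [m]` (with `k ≤ n`) and every dissatisfaction function `α`, some
optimal `k`-Monroe assignment under `α`-`ℓ_∞`-Monroe has the contiguous blocks
property. -/
theorem monroe_egalitarian_narcissistic_contiguous {m n : ℕ} (hn : 0 < n)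
    (prefs : Fin n → (Fin m ≃ Fin m))
    (hfirst : prefs ⟨0, hn⟩ = Equiv.refl (Fin m))
    (hsc : ∀ a b : Fin m, (prefs ⟨0, hn⟩ a : ℕ) < prefs ⟨0, hn⟩ b →
      ∃ t : ℕ, ∀ v : Fin n, ((prefs v a : ℕ) < prefs v b ↔ (v : ℕ) < t))
    (hnarc : ∀ c : Fin m, ∃ v : Fin n, (prefs v c : ℕ) = 0)
    (k : ℕ) (hk1 : 1 ≤ k) (hkm : k ≤ m) (hkn : k ≤ n)
    (α : ℕ → ℕ) (hα : Monotone α) (hα1 : α 1 = 0) :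
    ∃ Φ : Fin n → Fin m,
      ((Finset.univ.image Φ).card = k ∧
        ∀ c : Fin m,
          (Finset.univ.filter (fun v => Φ v = c)).card = 0 ∨
          (n / k ≤ (Finset.univ.filter (fun v => Φ v = c)).card ∧
            (Finset.univ.filter (fun v => Φ v = c)).card ≤ (n + k - 1) / k)) ∧
      (∀ Ψ : Fin n → Fin m,
        ((Finset.univ.image Ψ).card = k ∧
          ∀ c : Fin m,
            (Finset.univ.filter (fun v => Ψ v = c)).card = 0 ∨
            (n / k ≤ (Finset.univ.filter (fun v => Ψ v = c)).card ∧
              (Finset.univ.filter (fun v => Ψ v = c)).card ≤ (n + k - 1) / k)) →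
        (Finset.univ.sup fun v : Fin n => α ((prefs v (Φ v) : ℕ) + 1)) ≤
          (Finset.univ.sup fun v : Fin n => α ((prefs v (Ψ v) : ℕ) + 1))) ∧
      (∀ c : Fin m, (∃ v, Φ v = c) → ∃ t t' : ℕ, t ≤ t' ∧
        ∀ v : Fin n, Φ v = c ↔ (t ≤ (v : ℕ) ∧ (v : ℕ) ≤ t')) ∧
      (∀ c c' : Fin m, c < c' → ∀ v w : Fin n, Φ v = c → Φ w = c' → v < w) := by
  classical
  have hm : 0 < m := lt_of_lt_of_le hk1 hkm
  have hsc' : ∀ a b : Fin m, (a : ℕ) < (b : ℕ) →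
      ∃ t : ℕ, ∀ v : Fin n, ((prefs v a : ℕ) < prefs v b ↔ (v : ℕ) < t) := by
    intro a b hab
    apply hsc
    rw [hfirst]
    simpa using hab
  obtain ⟨Φ0, hΦ0mono, hΦ0img, hΦ0fib⟩ := aux_base hn hk1 hkm hkn
  set Valid : (Fin n → Fin m) → Prop := fun Ψ =>
    (Finset.univ.image Ψ).card = k ∧
      ∀ c : Fin m,
        (Finset.univ.filter (fun v => Ψ v = c)).card = 0 ∨
        (n / k ≤ (Finset.univ.filter (fun v => Ψ v = c)).card ∧
          (Finset.univ.filter (fun v => Ψ v = c)).card ≤ (n + k - 1) / k) with hValid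
  set F : (Fin n → Fin m) → ℕ :=
    fun Ψ => Finset.univ.sup fun v : Fin n => α ((prefs v (Ψ v) : ℕ) + 1) with hF
  set S : Finset (Fin n → Fin m) :=
    Finset.univ.filter (fun Ψ => Monotone Ψ ∧ Valid Ψ) with hS
  have hS0 : Φ0 ∈ S := by
    rw [hS, Finset.mem_filter]
    exact ⟨Finset.mem_univ _, hΦ0mono, hΦ0img, hΦ0fib⟩
  obtain ⟨Φ, hΦS, hmin⟩ := Finset.exists_min_image S F ⟨Φ0, hS0⟩
  rw [hS, Finset.mem_filter] at hΦS
  obtain ⟨-, hΦmono, hΦvalid⟩ := hΦS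
  refine ⟨Φ, hΦvalid, ?_, ?_, ?_⟩
  · -- optimality
    intro Ψ hΨvalid
    obtain ⟨Φ', hΦ'mono, hΦ'fib, hΦ'cost⟩ :=
      aux_sort hn hm prefs hsc' hnarc α hα (n * n * m) Ψ (Nat.le_add_left _ _)
    have hΦ'valid : Valid Φ' := by
      constructor
      · rw [aux_image_eq Φ' Ψ hΦ'fib]
        exact hΨvalid.1
      · intro c
        rw [hΦ'fib c]
        exact hΨvalid.2 c
    have hΦ'S : Φ' ∈ S := by
      rw [hS, Finset.mem_filter]
      exact ⟨Finset.mem_univ _, hΦ'mono, hΦ'valid⟩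
    exact le_trans (hmin Φ' hΦ'S) hΦ'cost
  · -- contiguous blocks
    intro c ⟨v, hv⟩
    set s : Finset (Fin n) := Finset.univ.filter (fun u => Φ u = c) with hs
    have hne : s.Nonempty := ⟨v, by rw [hs, Finset.mem_filter]; exact ⟨Finset.mem_univ _, hv⟩⟩
    refine ⟨(s.min' hne : ℕ), (s.max' hne : ℕ), ?_, ?_⟩
    · exact Fin.le_def.1 (s.min'_le _ (s.max'_mem hne))
    · intro u
      constructor
      · intro hu
        have hu' : u ∈ s := by rw [hs, Finset.mem_filter]; exact ⟨Finset.mem_univ _, hu⟩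
        exact ⟨Fin.le_def.1 (s.min'_le _ hu'), Fin.le_def.1 (s.le_max' _ hu')⟩
      · rintro ⟨h1, h2⟩
        have hmin' : Φ (s.min' hne) = c := (Finset.mem_filter.1 (s.min'_mem hne)).2
        have hmax' : Φ (s.max' hne) = c := (Finset.mem_filter.1 (s.max'_mem hne)).2
        have e1 : Φ (s.min' hne) ≤ Φ u := hΦmono (Fin.le_def.2 h1)
        have e2 : Φ u ≤ Φ (s.max' hne) := hΦmono (Fin.le_def.2 h2)
        rw [hmin'] at e1
        rw [hmax'] at e2
        exact le_antisymm e2 e1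
  · -- block ordering
    intro c c' hcc' v w hv hw
    by_contra hcon
    push_neg at hcon
    have := hΦmono hcon
    rw [hv, hw] at this
    exact absurd (lt_of_lt_of_le hcc' this) (lt_irrefl _)
end

section
/- Let E be a single-crossing narcissistic election with voter order v_1, ..., v_n, and let Φ be a k-Monroe assignment. Suppose Φ(v_i) = c_s and Φ(v_j) = c_r with i < j, where c_s is the candidate in Φ(V) that v_1 ranks lowest and r ≠ s. Then the assignment Φ' obtained from Φ by swapping the candidates assigned to v_i and v_j (Φ'(v_i) = c_r, Φ'(v_j) = c_s, Φ' = Φ elsewhere) is a k-Monroe assignment with ℓ_∞(Φ') ≤ ℓ_∞(Φ). -/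
/-!
Since `c_s` is the lowest candidate of `Φ(V)` for `v_1`, the first voter prefers `c_r` to `c_s`,
so by single-crossing the voters preferring `c_r` to `c_s` form a prefix `v_1, …, v_{t-1}`.
Narcissism puts a voter ranking `c_r` first inside that prefix and one ranking `c_s` first
outside it, and single-crossing makes the position of a candidate unimodal along the voter
order, with its minimum at a voter ranking it first. If `v_i` lies in the prefix it prefers
`c_r` to its old `c_s`; otherwise `v_i, v_j` lie right of a voter ranking `c_r` first, so `v_i`
ranks `c_r` no worse than `v_j` did. Symmetrically for `v_j` and `c_s`. Hence the worst position over
`{v_i, v_j}` does not increase, while the swap leaves the sizes of all blocks unchanged.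
-/

open Finset

/-- `P v c` is the position of candidate `c` in the ranking of voter `v`, `0` being the top. -/
def IsSingleCrossing {ι α : Type*} [Preorder ι] {m : ℕ} (P : ι → α ≃ Fin m) : Prop :=
  ∀ a b : α, IsLowerSet {v | P v a < P v b} ∨ IsUpperSet {v | P v a < P v b}

section Positions

variable {α : Type*} {m : ℕ}

lemma Equiv.le_of_forall_lt_imp_lt [Fintype α] {e e' : α ≃ Fin m} {c : α}
    (h : ∀ d, e d < e c → e' d < e' c) : e c ≤ e' c := by
  have hcard (f : α ≃ Fin m) : #{d | f d < f c} = f c := by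
    rw [← Fin.card_Iio]
    exact card_equiv f (by simp)
  rw [Fin.le_def, ← hcard e, ← hcard e']
  exact card_le_card fun d => by simpa using h d

lemma Equiv.lt_of_val_eq_zero {e : α ≃ Fin m} {c d : α} (hc : (e c : ℕ) = 0) (hd : d ≠ c) :
    e c < e d := by
  rw [Fin.lt_def, hc, Nat.pos_iff_ne_zero]
  exact fun h => hd (e.injective (Fin.ext (h.trans hc.symm)))

end Positions

lemma isLowerSet_of_threshold {n : ℕ} {p : Fin n → Prop} {t : ℕ}
    (h : ∀ v, p v ↔ (v : ℕ) < t) : IsLowerSet {v | p v} :=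
  fun u v hvu hu => (h v).2 ((Fin.le_def.1 hvu).trans_lt ((h u).1 hu))

lemma isSingleCrossing_of_threshold {α : Type*} {m n : ℕ} (hn : 0 < n)
    (P : Fin n → α ≃ Fin m)
    (hsc : ∀ a b : α, (P ⟨0, hn⟩ a : ℕ) < P ⟨0, hn⟩ b →
      ∃ t : ℕ, ∀ v : Fin n, ((P v a : ℕ) < P v b ↔ (v : ℕ) < t)) :
    IsSingleCrossing P := by
  intro a b
  rcases lt_trichotomy (P ⟨0, hn⟩ a) (P ⟨0, hn⟩ b) with hab | hab | hba
  · obtain ⟨t, ht⟩ := hsc a b hab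
    exact .inl (isLowerSet_of_threshold fun v => Fin.lt_def.trans (ht v))
  · obtain rfl := (P ⟨0, hn⟩).injective hab
    exact .inl (by simpa using isLowerSet_empty)
  · obtain ⟨t, ht⟩ := hsc b a hba
    have hlower := isLowerSet_of_threshold fun v => Fin.lt_def.trans (ht v)
    refine .inr fun u v huv (hu : P u a < P u b) =>
      show P v a < P v b from lt_of_le_of_ne ?_ ?_
    · exact not_lt.1 fun hv => (lt_asymm hu) (hlower huv hv)
    · exact (P v).injective.ne (ne_of_apply_ne (P u) hu.ne)

namespace IsSingleCrossing

variable {ι α : Type*} [Fintype α] {m : ℕ} {P : ι → α ≃ Fin m}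

lemma antitoneOn_Iic [Preorder ι] {c : α} {w : ι} (hP : IsSingleCrossing P)
    (hw : (P w c : ℕ) = 0) : AntitoneOn (fun v => P v c) (Set.Iic w) := fun _ _ _ hvw huv =>
  Equiv.le_of_forall_lt_imp_lt fun d hd => (hP d c).elim (fun hl => hl huv hd)
    fun hu => absurd (Fin.lt_def.1 (hu hvw hd)) (hw ▸ Nat.not_lt_zero _)

lemma monotoneOn_Ici [Preorder ι] {c : α} {w : ι} (hP : IsSingleCrossing P)
    (hw : (P w c : ℕ) = 0) : MonotoneOn (fun v => P v c) (Set.Ici w) := fun _ hwu _ _ huv =>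
  Equiv.le_of_forall_lt_imp_lt fun d hd => (hP d c).elim
    (fun hl => absurd (Fin.lt_def.1 (hl hwu hd)) (hw ▸ Nat.not_lt_zero _)) fun hu => hu huv hd

lemma max_apply_swap_le [LinearOrder ι] (hP : IsSingleCrossing P) {a b : α} (hab : a ≠ b)
    (hlower : IsLowerSet {v | P v a < P v b})
    {wa wb : ι} (hwa : (P wa a : ℕ) = 0) (hwb : (P wb b : ℕ) = 0) {i j : ι} (hij : i ≤ j) :
    max (P i a) (P j b) ≤ max (P i b) (P j a) := by
  refine max_le ?_ ?_
  · by_cases hi : P i a < P i b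
    · exact le_max_of_le_left hi.le
    have hwai : wa ≤ i := le_of_not_ge fun hiwa =>
      hi (hlower hiwa (Equiv.lt_of_val_eq_zero hwa hab.symm))
    exact le_max_of_le_right (hP.monotoneOn_Ici hwa hwai (hwai.trans hij) hij)
  · by_cases hj : P j a < P j b
    · have hjwb : j ≤ wb := le_of_not_ge fun hwbj =>
        (lt_asymm (Equiv.lt_of_val_eq_zero hwb hab)) (hlower hwbj hj)
      exact le_max_of_le_left (hP.antitoneOn_Iic hwb (hij.trans hjwb) hjwb hij)
    · exact le_max_of_le_right (not_lt.1 hj)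

end IsSingleCrossing

section Assignments

variable {ι ι' κ : Type*} [Fintype ι] [Fintype ι']

lemma image_univ_comp_equiv [DecidableEq κ] (Φ : ι → κ) (σ : ι' ≃ ι) :
    univ.image (Φ ∘ σ) = univ.image Φ := by
  ext c
  simpa using σ.surjective.exists (p := (Φ · = c)) |>.symm

lemma card_filter_comp_equiv [DecidableEq κ] (Φ : ι → κ) (σ : ι' ≃ ι) (c : κ) :
    #{v | (Φ ∘ σ) v = c} = #{v | Φ v = c} :=
  card_equiv σ (by simp)

lemma sup_univ_comp_swap_le {β : Type*} [DecidableEq ι] [SemilatticeSup β] [OrderBot β]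
    (g : ι → κ → β) (Φ : ι → κ) {i j : ι}
    (h : g i (Φ j) ⊔ g j (Φ i) ≤ g i (Φ i) ⊔ g j (Φ j)) :
    (univ.sup fun v => g v (Φ (Equiv.swap i j v))) ≤ univ.sup fun v => g v (Φ v) := by
  have hle (u : ι) : g u (Φ u) ≤ univ.sup fun v => g v (Φ v) :=
    le_sup (f := fun v => g v (Φ v)) (mem_univ u)
  refine Finset.sup_le fun v _ => ?_
  rcases eq_or_ne v i with rfl | hvi
  · rw [Equiv.swap_apply_left]
    exact (le_sup_left.trans h).trans (sup_le (hle _) (hle _))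
  rcases eq_or_ne v j with rfl | hvj
  · rw [Equiv.swap_apply_right]
    exact (le_sup_right.trans h).trans (sup_le (hle _) (hle _))
  rw [Equiv.swap_apply_of_ne_of_ne hvi hvj]
  exact hle v

end Assignments

theorem monroe_swap_lemma_general {m n k : ℕ} (hn : 0 < n)
    (prefs : Fin n → (Fin m ≃ Fin m))
    (hsc : ∀ a b : Fin m, (prefs ⟨0, hn⟩ a : ℕ) < prefs ⟨0, hn⟩ b →
      ∃ t : ℕ, ∀ v : Fin n, ((prefs v a : ℕ) < prefs v b ↔ (v : ℕ) < t))
    (hnarc : ∀ c : Fin m, ∃ v : Fin n, (prefs v c : ℕ) = 0)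
    (α : ℕ → ℕ) (hα : Monotone α)
    (Φ : Fin n → Fin m)
    (hM : (Finset.univ.image Φ).card = k ∧
      ∀ c : Fin m,
        (Finset.univ.filter (fun v => Φ v = c)).card = 0 ∨
        (n / k ≤ (Finset.univ.filter (fun v => Φ v = c)).card ∧
          (Finset.univ.filter (fun v => Φ v = c)).card ≤ (n + k - 1) / k))
    (i j : Fin n) (hij : i < j) (cs cr : Fin m)
    (hΦi : Φ i = cs) (hΦj : Φ j = cr) (hrs : cr ≠ cs)
    (hlow : ∀ c ∈ Finset.univ.image Φ, (prefs ⟨0, hn⟩ c : ℕ) ≤ prefs ⟨0, hn⟩ cs)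
    (Φ' : Fin n → Fin m)
    (hΦ' : Φ' = fun l => if l = i then cr else if l = j then cs else Φ l) :
    ((Finset.univ.image Φ').card = k ∧
      ∀ c : Fin m,
        (Finset.univ.filter (fun v => Φ' v = c)).card = 0 ∨
        (n / k ≤ (Finset.univ.filter (fun v => Φ' v = c)).card ∧
          (Finset.univ.filter (fun v => Φ' v = c)).card ≤ (n + k - 1) / k)) ∧
    (Finset.univ.sup fun v : Fin n => α ((prefs v (Φ' v) : ℕ) + 1)) ≤
      (Finset.univ.sup fun v : Fin n => α ((prefs v (Φ v) : ℕ) + 1)) := by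
  have hswap : Φ' = Φ ∘ Equiv.swap i j := by
    subst hΦ'
    funext l
    rcases eq_or_ne l i with rfl | hli
    · simp [hΦj]
    rcases eq_or_ne l j with rfl | hlj
    · simp [hij.ne', hΦi]
    · simp [hli, hlj, Equiv.swap_apply_of_ne_of_ne hli hlj]
  subst hswap
  refine ⟨by simpa only [image_univ_comp_equiv, card_filter_comp_equiv] using hM, ?_⟩
  have hcr : prefs ⟨0, hn⟩ cr < prefs ⟨0, hn⟩ cs :=
    lt_of_le_of_ne (Fin.le_def.2 (hlow cr (hΦj ▸ mem_image_of_mem Φ (mem_univ j))))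
      ((prefs _).injective.ne hrs)
  obtain ⟨t, ht⟩ := hsc cr cs hcr
  obtain ⟨wr, hwr⟩ := hnarc cr
  obtain ⟨ws, hws⟩ := hnarc cs
  have hpos := (isSingleCrossing_of_threshold hn prefs hsc).max_apply_swap_le hrs
    (isLowerSet_of_threshold fun v => Fin.lt_def.trans (ht v)) hwr hws hij.le
  have hcost : Monotone fun p : Fin m => α (p + 1) :=
    fun p q hpq => hα (Nat.add_le_add_right (Fin.le_def.1 hpq) 1)
  refine sup_univ_comp_swap_le (fun v c => α ((prefs v c : ℕ) + 1)) Φ ?_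
  rw [hΦi, hΦj, ← hcost.map_sup, ← hcost.map_sup]
  exact hcost hpos

/-- the swap lemma. In a single-crossing narcissistic election, if `Φ`
is a `k`-Monroe assignment, `Φ(v_i) = c_s`, `Φ(v_j) = c_r` with `i < j` and `r ≠ s`,
and `c_s` is the candidate of `Φ(V)` ranked lowest by the first voter, then swapping
the candidates assigned to `v_i` and `v_j` yields a `k`-Monroe assignment with
egalitarian cost no larger than that of `Φ`. -/
theorem monroe_swap_lemma {m n k : ℕ} (hn : 0 < n)
    (prefs : Fin n → (Fin m ≃ Fin m))
    (hsc : ∀ a b : Fin m, (prefs ⟨0, hn⟩ a : ℕ) < prefs ⟨0, hn⟩ b →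
      ∃ t : ℕ, ∀ v : Fin n, ((prefs v a : ℕ) < prefs v b ↔ (v : ℕ) < t))
    (hnarc : ∀ c : Fin m, ∃ v : Fin n, (prefs v c : ℕ) = 0)
    (α : ℕ → ℕ) (hα : Monotone α) (hα1 : α 1 = 0)
    (Φ : Fin n → Fin m)
    (hM : (Finset.univ.image Φ).card = k ∧
      ∀ c : Fin m,
        (Finset.univ.filter (fun v => Φ v = c)).card = 0 ∨
        (n / k ≤ (Finset.univ.filter (fun v => Φ v = c)).card ∧
          (Finset.univ.filter (fun v => Φ v = c)).card ≤ (n + k - 1) / k))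
    (i j : Fin n) (hij : i < j) (cs cr : Fin m)
    (hΦi : Φ i = cs) (hΦj : Φ j = cr) (hrs : cr ≠ cs)
    (hlow : ∀ c ∈ Finset.univ.image Φ, (prefs ⟨0, hn⟩ c : ℕ) ≤ prefs ⟨0, hn⟩ cs)
    (Φ' : Fin n → Fin m)
    (hΦ' : Φ' = fun l => if l = i then cr else if l = j then cs else Φ l) :
    ((Finset.univ.image Φ').card = k ∧
      ∀ c : Fin m,
        (Finset.univ.filter (fun v => Φ' v = c)).card = 0 ∨
        (n / k ≤ (Finset.univ.filter (fun v => Φ' v = c)).card ∧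
          (Finset.univ.filter (fun v => Φ' v = c)).card ≤ (n + k - 1) / k)) ∧
    (Finset.univ.sup fun v : Fin n => α ((prefs v (Φ' v) : ℕ) + 1)) ≤
      (Finset.univ.sup fun v : Fin n => α ((prefs v (Φ v) : ℕ) + 1)) :=
  monroe_swap_lemma_general hn prefs hsc hnarc α hα Φ hM i j hij cs cr hΦi hΦj hrs hlow Φ' hΦ'
end

section
/- There exists a family of single-crossing elections, parameterized by m, with 2m+2 candidates and 4n voters, and target parliament size k = 2, such that under the Borda dissatisfaction function the optimal 2-Monroe assignment has utilitarian cost 2n, while every 2-Monroe assignment with the contiguous blocks property has utilitarian cost at least n(m+2). Concretely: C = {c_1, c_2} ∪ A ∪ B with |A| = |B| = m; n voters vote c_1 ≻ B ≻ c_2 ≻ A, n voters vote c_1 ≻ c_2 ≻ B^rev ≻ A, n voters vote c_1 ≻ c_2 ≻ A ≻ B^rev, and n voters vote c_1 ≻ A^rev ≻ c_2 ≻ B^rev (where A, B denote fixed orderings of those sets and superscript rev their reversals). -/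
/-- The election of Example `non-contig-sc`. Candidates (indexed by `Fin (2*m+2)`):
index `0` is `c₁`, index `1` is `c₂`, indices `2, …, m+1` are `a₁, …, a_m` and
indices `m+2, …, 2m+1` are `b₁, …, b_m`. Voters `Fin (4*n)` come in four groups of
`n` (voter `v` lies in group `v / n`): group 0 votes `c₁ ≻ B ≻ c₂ ≻ A`, group 1
votes `c₁ ≻ c₂ ≻ Bʳᵉᵛ ≻ A`, group 2 votes `c₁ ≻ c₂ ≻ A ≻ Bʳᵉᵛ`, group 3 votes
`c₁ ≻ Aʳᵉᵛ ≻ c₂ ≻ Bʳᵉᵛ`. `posEx m n v c` is the 1-based rank of `c` for `v`. -/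
def posEx (m n : ℕ) (v : Fin (4 * n)) (c : Fin (2 * m + 2)) : ℕ :=
  let g := (v : ℕ) / n
  let j := (c : ℕ)
  if j = 0 then 1
  else if j = 1 then (if g = 0 ∨ g = 3 then m + 2 else 2)
  else if j ≤ m + 1 then
    (if g ≤ 1 then m + 1 + j else if g = 2 then j + 1 else m + 3 - j)
  else
    (if g = 0 then j - m else if g = 1 then 2 * m + 4 - j else 3 * m + 4 - j)


def pp (m g j : ℕ) : ℕ :=
  if j = 0 then 1
  else if j = 1 then (if g = 0 ∨ g = 3 then m + 2 else 2)
  else if j ≤ m + 1 then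
    (if g ≤ 1 then m + 1 + j else if g = 2 then j + 1 else m + 3 - j)
  else
    (if g = 0 then j - m else if g = 1 then 2 * m + 4 - j else 3 * m + 4 - j)

lemma posEx_eq (m n : ℕ) (v : Fin (4 * n)) (c : Fin (2 * m + 2)) :
    posEx m n v c = pp m ((v : ℕ) / n) (c : ℕ) := rfl

lemma pp_ge_two (m g j : ℕ) (hj : j ≠ 0) (hj2 : j < 2 * m + 2) : 2 ≤ pp m g j := by
  unfold pp; split_ifs <;> first | contradiction | omega

lemma lb01 (m j : ℕ) (hm : 0 < m) (hj : j ≠ 0) (hj2 : j < 2 * m + 2) :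
    m + 2 ≤ (pp m 0 j - 1) + (pp m 1 j - 1) := by
  unfold pp; split_ifs <;> first | contradiction | omega

lemma lb23 (m j : ℕ) (hm : 0 < m) (hj : j ≠ 0) (hj2 : j < 2 * m + 2) :
    m + 2 ≤ (pp m 2 j - 1) + (pp m 3 j - 1) := by
  unfold pp; split_ifs <;> first | contradiction | omega

lemma chunk (n : ℕ) (hn : 0 < n) (F : ℕ → ℕ) (k : ℕ) :
    ∑ i ∈ Finset.Ico (k*n) (k*n+n), F (i/n) = n * F k := by
  have : ∀ i ∈ Finset.Ico (k*n) (k*n+n), F (i/n) = F k := by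
    intro i hi
    simp only [Finset.mem_Ico] at hi
    congr 1
    exact Nat.div_eq_of_lt_le (by omega) (by rw [Nat.succ_mul]; omega)
  rw [Finset.sum_congr rfl this, Finset.sum_const, Nat.card_Ico, smul_eq_mul]
  congr 1
  omega

lemma sum4 (n : ℕ) (hn : 0 < n) (F : ℕ → ℕ) :
    ∑ v : Fin (4 * n), F ((v : ℕ) / n) = n * F 0 + n * F 1 + n * F 2 + n * F 3 := by
  have e0 : ∑ i ∈ Finset.Ico 0 n, F (i/n) = n * F 0 := by
    have h := chunk n hn F 0; rwa [show (0*n : ℕ) = 0 by ring, zero_add] at h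
  have e1 : ∑ i ∈ Finset.Ico n (2*n), F (i/n) = n * F 1 := by
    have h := chunk n hn F 1; rwa [show (1*n : ℕ) = n by ring, show (n+n : ℕ) = 2*n by ring] at h
  have e2 : ∑ i ∈ Finset.Ico (2*n) (3*n), F (i/n) = n * F 2 := by
    have h := chunk n hn F 2; rwa [show (2*n+n : ℕ) = 3*n by ring] at h
  have e3 : ∑ i ∈ Finset.Ico (3*n) (4*n), F (i/n) = n * F 3 := by
    have h := chunk n hn F 3; rwa [show (3*n+n : ℕ) = 4*n by ring] at h
  rw [Fin.sum_univ_eq_sum_range (fun i => F (i / n)) (4 * n), Finset.range_eq_Ico,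
    ← Finset.sum_Ico_consecutive (fun i => F (i/n)) (by omega : 0 ≤ n) (by omega : n ≤ 4*n),
    ← Finset.sum_Ico_consecutive (fun i => F (i/n)) (by omega : n ≤ 2*n) (by omega : 2*n ≤ 4*n),
    ← Finset.sum_Ico_consecutive (fun i => F (i/n)) (by omega : 2*n ≤ 3*n) (by omega : 3*n ≤ 4*n),
    e0, e1, e2, e3]
  ring

lemma card_filter_group (n : ℕ) (hn : 0 < n) (p : Fin (4*n) → Prop) [DecidablePred p]
    (F : ℕ → ℕ) (hp : ∀ v, (if p v then 1 else 0) = F ((v:ℕ)/n)) :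
    (Finset.univ.filter p).card = n * F 0 + n * F 1 + n * F 2 + n * F 3 := by
  rw [Finset.card_filter, Finset.sum_congr rfl (fun v _ => hp v)]
  exact sum4 n hn F

lemma count_le (N t : ℕ) : ∑ i ∈ Finset.range N, (if i ≤ t then 1 else 0) = min (t+1) N := by
  induction N with
  | zero => simp
  | succ N ih => rw [Finset.sum_range_succ, ih]; split_ifs <;> omega

lemma card_le (N t : ℕ) :
    (Finset.univ.filter (fun v : Fin N => (v:ℕ) ≤ t)).card = min (t+1) N := by
  rw [Finset.card_filter, Fin.sum_univ_eq_sum_range (fun i => if i ≤ t then 1 else 0) N]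
  exact count_le N t
set_option maxHeartbeats 2000000 in
lemma key (m ja jb : ℕ) (hm : 0 < m) (ha : ja < 2*m+2) (hb : jb < 2*m+2)
    (h0 : pp m 0 ja < pp m 0 jb) :
    ∃ k, ∀ g, g < 4 → (pp m g ja < pp m g jb ↔ g < k) := by
  refine ⟨if ja = 0 then 4 else if ja ≤ m+1 then 3 else if 2 ≤ jb ∧ jb ≤ m+1 then 2 else 1, ?_⟩
  intro g hg
  interval_cases g <;> unfold pp at h0 ⊢ <;> split_ifs at h0 ⊢ <;> first | contradiction | omega

/-- STATEMENT 10: this family of elections is single-crossing; under Borda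
dissatisfaction the optimal 2-Monroe assignment has utilitarian cost `2n`, while
every 2-Monroe assignment with the contiguous blocks property has utilitarian
cost at least `n(m+2)`. -/theorem monroe_contiguous_counterexample (m n : ℕ) (hm : 0 < m) (hn : 0 < n) :
    (∀ a b : Fin (2 * m + 2),
        posEx m n ⟨0, by omega⟩ a < posEx m n ⟨0, by omega⟩ b →
        ∃ t : ℕ, ∀ v : Fin (4 * n), posEx m n v a < posEx m n v b ↔ (v : ℕ) < t) ∧
    (∃ Φ : Fin (4 * n) → Fin (2 * m + 2),
      ((Finset.univ.image Φ).card = 2 ∧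
        ∀ c, (Finset.univ.filter (fun v => Φ v = c)).card = 0 ∨
             (Finset.univ.filter (fun v => Φ v = c)).card = 2 * n) ∧
      (∑ v : Fin (4 * n), (posEx m n v (Φ v) - 1)) = 2 * n ∧
      (∀ Ψ : Fin (4 * n) → Fin (2 * m + 2),
        ((Finset.univ.image Ψ).card = 2 ∧
          ∀ c, (Finset.univ.filter (fun v => Ψ v = c)).card = 0 ∨
               (Finset.univ.filter (fun v => Ψ v = c)).card = 2 * n) →
        (∑ v : Fin (4 * n), (posEx m n v (Φ v) - 1)) ≤
          ∑ v : Fin (4 * n), (posEx m n v (Ψ v) - 1))) ∧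
    (∀ Φ : Fin (4 * n) → Fin (2 * m + 2),
      ((Finset.univ.image Φ).card = 2 ∧
        ∀ c, (Finset.univ.filter (fun v => Φ v = c)).card = 0 ∨
             (Finset.univ.filter (fun v => Φ v = c)).card = 2 * n) →
      (∀ c : Fin (2 * m + 2), (∃ v, Φ v = c) → ∃ t t' : ℕ,
        ∀ v : Fin (4 * n), Φ v = c ↔ (t ≤ (v : ℕ) ∧ (v : ℕ) ≤ t')) →
      n * (m + 2) ≤ ∑ v : Fin (4 * n), (posEx m n v (Φ v) - 1)) := by
  refine ⟨?_, ?_, ?_⟩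
  · -- Part 1: single-crossing
    intro a b hab
    have h0 : pp m 0 (a : ℕ) < pp m 0 (b : ℕ) := by
      simpa [posEx_eq, Nat.zero_div] using hab
    obtain ⟨k, hk⟩ := key m (a : ℕ) (b : ℕ) hm a.isLt b.isLt h0
    refine ⟨k * n, fun v => ?_⟩
    have hgv : (v : ℕ) / n < 4 := by
      rw [Nat.div_lt_iff_lt_mul hn]; omega
    rw [posEx_eq, posEx_eq, hk _ hgv, Nat.div_lt_iff_lt_mul hn]
  · -- Part 2

    set c0 : Fin (2 * m + 2) := ⟨0, by omega⟩ with hc0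
    set c1 : Fin (2 * m + 2) := ⟨1, by omega⟩ with hc1
    set Φ : Fin (4 * n) → Fin (2 * m + 2) :=
      fun v => if (v : ℕ) / n = 1 ∨ (v : ℕ) / n = 2 then c1 else c0 with hΦ
    have hcost : (∑ v : Fin (4 * n), (posEx m n v (Φ v) - 1)) = 2 * n := by
      have hpt : ∀ v : Fin (4 * n), posEx m n v (Φ v) - 1 =
          (fun g => if g = 1 ∨ g = 2 then 1 else 0) ((v : ℕ) / n) := by
        intro v
        by_cases h : (v : ℕ) / n = 1 ∨ (v : ℕ) / n = 2
        · rcases h with h | h <;> simp [hΦ, posEx_eq, pp, h, hc1]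
        · simp [hΦ, posEx_eq, pp, h, hc0]
      rw [Finset.sum_congr rfl (fun v _ => hpt v), sum4 n hn (fun g => if g = 1 ∨ g = 2 then 1 else 0)]
      simp
      omega
    refine ⟨Φ, ⟨?_, ?_⟩, hcost, ?_⟩
    · -- image card
      have himg : Finset.univ.image Φ = {c0, c1} := by
        apply Finset.Subset.antisymm
        · intro c hc
          simp only [Finset.mem_image] at hc
          obtain ⟨v, _, hv⟩ := hc
          simp only [hΦ] at hv
          split_ifs at hv <;> simp [← hv]
        · intro c hc
          simp only [Finset.mem_insert, Finset.mem_singleton] at hc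
          rcases hc with rfl | rfl
          · exact Finset.mem_image.mpr ⟨⟨0, by omega⟩, Finset.mem_univ _, by
              simp [hΦ, Nat.zero_div]⟩
          · exact Finset.mem_image.mpr ⟨⟨n, by omega⟩, Finset.mem_univ _, by
              simp [hΦ, Nat.div_self hn]⟩
      rw [himg, Finset.card_insert_of_notMem (by simp [hc0, hc1, Fin.ext_iff]),
        Finset.card_singleton]
    · -- counts
      intro c
      by_cases h0 : c = c0
      · right
        subst h0
        rw [card_filter_group n hn _ (fun g => if g = 1 ∨ g = 2 then 0 else 1) (fun v => by
          by_cases h : (v : ℕ) / n = 1 ∨ (v : ℕ) / n = 2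
          · simp [hΦ, h, hc0, hc1, Fin.ext_iff]
          · simp [hΦ, h])]
        simp
        omega
      · by_cases h1 : c = c1
        · right
          subst h1
          rw [card_filter_group n hn _ (fun g => if g = 1 ∨ g = 2 then 1 else 0) (fun v => by
            by_cases h : (v : ℕ) / n = 1 ∨ (v : ℕ) / n = 2
            · simp [hΦ, h]
            · simp [hΦ, h, hc0, hc1, Fin.ext_iff])]
          simp
          omega
        · left
          rw [Finset.card_eq_zero, Finset.filter_eq_empty_iff]
          intro v _
          simp only [hΦ]
          split_ifs <;> [exact fun hh => h1 hh.symm; exact fun hh => h0 hh.symm]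
    · -- optimality
      intro Ψ ⟨hΨimg, hΨcnt⟩
      rw [hcost]
      have h1 : ∀ v, (if Ψ v = c0 then 0 else 1) ≤ posEx m n v (Ψ v) - 1 := by
        intro v
        by_cases h : Ψ v = c0
        · simp [h]
        · have h2 : 2 ≤ posEx m n v (Ψ v) := by
            rw [posEx_eq]
            exact pp_ge_two m _ _ (fun he => h (Fin.ext (by simpa [hc0] using he))) (Ψ v).isLt
          simp only [if_neg h]
          omega
      have hsum1 : (Finset.univ.filter (fun v => Ψ v = c0)).card
          + ∑ v : Fin (4 * n), (if Ψ v = c0 then 0 else 1) = 4 * n := by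
        rw [Finset.card_filter, ← Finset.sum_add_distrib]
        have : ∀ v : Fin (4 * n), ((if Ψ v = c0 then 1 else 0) + if Ψ v = c0 then 0 else 1) = 1 := by
          intro v; split_ifs <;> rfl
        rw [Finset.sum_congr rfl (fun v _ => this v), Finset.sum_const, Finset.card_univ,
          Fintype.card_fin, smul_eq_mul, mul_one]
      have h3 : 2 * n ≤ ∑ v : Fin (4 * n), (if Ψ v = c0 then 0 else 1) := by
        rcases hΨcnt c0 with h | h <;> omega
      calc 2 * n ≤ ∑ v : Fin (4 * n), (if Ψ v = c0 then 0 else 1) := h3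
        _ ≤ ∑ v : Fin (4 * n), (posEx m n v (Ψ v) - 1) :=
            Finset.sum_le_sum (fun v _ => h1 v)
  · -- Part 3

    intro Φ ⟨himg, hcnt⟩ hcontig
    set v0 : Fin (4 * n) := ⟨0, by omega⟩ with hv0
    obtain ⟨t, t', hspec⟩ := hcontig (Φ v0) ⟨v0, rfl⟩
    have h00 : t ≤ 0 ∧ 0 ≤ t' := (hspec v0).mp rfl
    have hcardc : (Finset.univ.filter (fun v => Φ v = Φ v0)).card = 2 * n := by
      rcases hcnt (Φ v0) with h | h
      · exfalso
        rw [Finset.card_eq_zero, Finset.filter_eq_empty_iff] at h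
        exact h (Finset.mem_univ v0) rfl
      · exact h
    have hfe : Finset.univ.filter (fun v => Φ v = Φ v0)
        = Finset.univ.filter (fun v : Fin (4 * n) => (v : ℕ) ≤ t') := by
      ext v
      simp only [Finset.mem_filter, Finset.mem_univ, true_and, hspec v]
      omega
    have ht' : t' + 1 = 2 * n := by
      have h := card_le (4 * n) t'
      rw [← hfe, hcardc] at h
      omega
    have hblock1 : ∀ v : Fin (4 * n), Φ v = Φ v0 ↔ (v : ℕ) < 2 * n := by
      intro v; rw [hspec v]; omega
    set v1 : Fin (4 * n) := ⟨2 * n, by omega⟩ with hv1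
    have hne : Φ v1 ≠ Φ v0 := by
      intro h
      have h2 : 2 * n < 2 * n := (hblock1 v1).mp h
      omega
    have hcardc' : (Finset.univ.filter (fun v => Φ v = Φ v1)).card = 2 * n := by
      rcases hcnt (Φ v1) with h | h
      · exfalso
        rw [Finset.card_eq_zero, Finset.filter_eq_empty_iff] at h
        exact h (Finset.mem_univ v1) rfl
      · exact h
    have hcard2 : (Finset.univ.filter (fun v : Fin (4 * n) => ¬ (v : ℕ) ≤ t')).card = 2 * n := by
      have hh := Finset.card_filter_add_card_filter_not
        (s := Finset.univ) (p := fun v : Fin (4 * n) => (v : ℕ) ≤ t')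
      rw [card_le (4 * n) t'] at hh
      rw [Finset.card_univ, Fintype.card_fin] at hh
      omega
    have hblock2 : ∀ v : Fin (4 * n), 2 * n ≤ (v : ℕ) → Φ v = Φ v1 := by
      have hsub : Finset.univ.filter (fun v => Φ v = Φ v1)
          ⊆ Finset.univ.filter (fun v : Fin (4 * n) => ¬ (v : ℕ) ≤ t') := by
        intro v hv
        simp only [Finset.mem_filter, Finset.mem_univ, true_and] at hv ⊢
        intro hle
        exact hne (hv.symm.trans ((hblock1 v).mpr (by omega)))
      have heq : Finset.univ.filter (fun v => Φ v = Φ v1)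
          = Finset.univ.filter (fun v : Fin (4 * n) => ¬ (v : ℕ) ≤ t') :=
        Finset.eq_of_subset_of_card_le hsub (by omega)
      intro v hv
      have : v ∈ Finset.univ.filter (fun v : Fin (4 * n) => ¬ (v : ℕ) ≤ t') := by
        simp only [Finset.mem_filter, Finset.mem_univ, true_and]
        omega
      rw [← heq] at this
      exact (Finset.mem_filter.mp this).2
    have hpt : ∀ v : Fin (4 * n), posEx m n v (Φ v) - 1 =
        (fun g => if g ≤ 1 then pp m g ((Φ v0 : Fin (2*m+2)) : ℕ) - 1
                  else pp m g ((Φ v1 : Fin (2*m+2)) : ℕ) - 1) ((v : ℕ) / n) := by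
      intro v
      by_cases h : (v : ℕ) < 2 * n
      · have hg : (v : ℕ) / n ≤ 1 := by
          have : (v : ℕ) / n < 2 := by rw [Nat.div_lt_iff_lt_mul hn]; omega
          omega
        rw [(hblock1 v).mpr h, posEx_eq]
        simp [hg]
      · have hg : ¬ (v : ℕ) / n ≤ 1 := by
          have : 2 ≤ (v : ℕ) / n := by rw [Nat.le_div_iff_mul_le hn]; omega
          omega
        rw [hblock2 v (by omega), posEx_eq]
        simp [hg]
    rw [Finset.sum_congr rfl (fun v _ => hpt v),
      sum4 n hn (fun g => if g ≤ 1 then pp m g ((Φ v0 : Fin (2*m+2)) : ℕ) - 1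
                  else pp m g ((Φ v1 : Fin (2*m+2)) : ℕ) - 1)]
    norm_num
    by_cases h0 : ((Φ v0 : Fin (2*m+2)) : ℕ) = 0
    · have h0' : ((Φ v1 : Fin (2*m+2)) : ℕ) ≠ 0 := by
        intro h
        exact hne (Fin.ext (by omega))
      have hb := lb23 m _ hm h0' (Φ v1).isLt
      have h2 : n * (m + 2) ≤ n * (pp m 2 ((Φ v1 : Fin (2*m+2)) : ℕ) - 1)
          + n * (pp m 3 ((Φ v1 : Fin (2*m+2)) : ℕ) - 1) := by
        rw [← Nat.mul_add]; exact Nat.mul_le_mul_left n hb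
      omega
    · have hb := lb01 m _ hm h0 (Φ v0).isLt
      have h2 : n * (m + 2) ≤ n * ((pp m 0 ((Φ v0 : Fin (2*m+2)) : ℕ) - 1)
          + (pp m 1 ((Φ v0 : Fin (2*m+2)) : ℕ) - 1)) := Nat.mul_le_mul_left n hb
      have h3 : n * ((pp m 0 ((Φ v0 : Fin (2*m+2)) : ℕ) - 1)
          + (pp m 1 ((Φ v0 : Fin (2*m+2)) : ℕ) - 1))
          = n * (pp m 0 ((Φ v0 : Fin (2*m+2)) : ℕ) - 1)
          + n * (pp m 1 ((Φ v0 : Fin (2*m+2)) : ℕ) - 1) := Nat.mul_add n _ _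
      omega
end

section
/- Consider the narcissistic single-crossing election on candidates {a, b, c, d, e, f} with the twelve voters v_1: a≻b≻c≻d≻e≻f, v_2: b≻a≻c≻d≻e≻f, v_3: b≻c≻a≻d≻e≻f, v_4 = v_5 = v_6: c≻b≻a≻d≻e≻f, v_7: c≻b≻d≻a≻e≻f, v_8: c≻d≻b≻a≻e≻f, v_9: d≻e≻f≻c≻b≻a, v_10 = v_11: e≻f≻d≻c≻b≻a, v_12: f≻e≻d≻c≻b≻a. For k = 2 and Borda dissatisfaction, the minimum utilitarian cost over all 2-Monroe assignments is 11 (achieved by assigning e to v_1, v_2, v_9, v_10, v_11, v_12 and c to v_3, ..., v_8), while the minimum utilitarian cost over 2-Monroe assignments with the contiguous blocks property is 13. -/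
/-- The twelve-voter election of Example `non-contig-util`, over the candidates
`a, b, c, d, e, f` encoded as `0, 1, 2, 3, 4, 5 : Fin 6`. `posNC v` lists the
1-based ranks of `a, …, f` in voter `v`'s preference order. -/
def posNC : Fin 12 → Fin 6 → ℕ :=
  ![![1,2,3,4,5,6],  -- v₁ : a≻b≻c≻d≻e≻f
    ![2,1,3,4,5,6],  -- v₂ : b≻a≻c≻d≻e≻f
    ![3,1,2,4,5,6],  -- v₃ : b≻c≻a≻d≻e≻f
    ![3,2,1,4,5,6],  -- v₄ : c≻b≻a≻d≻e≻f
    ![3,2,1,4,5,6],  -- v₅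
    ![3,2,1,4,5,6],  -- v₆
    ![4,2,1,3,5,6],  -- v₇ : c≻b≻d≻a≻e≻f
    ![4,3,1,2,5,6],  -- v₈ : c≻d≻b≻a≻e≻f
    ![6,5,4,1,2,3],  -- v₉ : d≻e≻f≻c≻b≻a
    ![6,5,4,3,1,2],  -- v₁₀ : e≻f≻d≻c≻b≻a
    ![6,5,4,3,1,2],  -- v₁₁
    ![6,5,4,3,2,1]]  -- v₁₂ : f≻e≻d≻c≻b≻a

/-- A 2-Monroe assignment for 12 voters: exactly 2 candidates used, each assigned
to exactly 6 voters. -/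
def IsMonroe2of12 (Φ : Fin 12 → Fin 6) : Prop :=
  (Finset.univ.image Φ).card = 2 ∧
  ∀ c : Fin 6, (Finset.univ.filter (fun v => Φ v = c)).card = 0 ∨
               (Finset.univ.filter (fun v => Φ v = c)).card = 6

/-- Contiguous blocks property for this election. -/
def CBP12 (Φ : Fin 12 → Fin 6) : Prop :=
  ∀ c : Fin 6, (∃ v, Φ v = c) → ∃ t t' : ℕ,
    ∀ v : Fin 12, Φ v = c ↔ (t ≤ (v : ℕ) ∧ (v : ℕ) ≤ t')

/-- Utilitarian Borda cost. -/
def cost12 (Φ : Fin 12 → Fin 6) : ℕ := ∑ v : Fin 12, (posNC v (Φ v) - 1)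

def Dtab : ℕ := 12345102345102345210345541023542013543012543012543012543102543201543210

def dis (v c : ℕ) : ℕ := Dtab / 10 ^ (6 * v + c) % 10

set_option maxHeartbeats 12000000 in
theorem key2 : ∀ b0 b1 b2 b3 b4 b5 b6 b7 b8 b9 b10 b11 : Bool,
    ((if b0 then (1:ℕ) else 0) + ((if b1 then (1:ℕ) else 0) + ((if b2 then (1:ℕ) else 0) + ((if b3 then (1:ℕ) else 0) + ((if b4 then (1:ℕ) else 0) + ((if b5 then (1:ℕ) else 0) + ((if b6 then (1:ℕ) else 0) + ((if b7 then (1:ℕ) else 0) + ((if b8 then (1:ℕ) else 0) + ((if b9 then (1:ℕ) else 0) + ((if b10 then (1:ℕ) else 0) + ((if b11 then (1:ℕ) else 0))))))))))))) = 6 → ∀ c1 c2 : Fin 6,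
    11 ≤ (if b0 then dis 0 c1.val else dis 0 c2.val) + ((if b1 then dis 1 c1.val else dis 1 c2.val) + ((if b2 then dis 2 c1.val else dis 2 c2.val) + ((if b3 then dis 3 c1.val else dis 3 c2.val) + ((if b4 then dis 4 c1.val else dis 4 c2.val) + ((if b5 then dis 5 c1.val else dis 5 c2.val) + ((if b6 then dis 6 c1.val else dis 6 c2.val) + ((if b7 then dis 7 c1.val else dis 7 c2.val) + ((if b8 then dis 8 c1.val else dis 8 c2.val) + ((if b9 then dis 9 c1.val else dis 9 c2.val) + ((if b10 then dis 10 c1.val else dis 10 c2.val) + ((if b11 then dis 11 c1.val else dis 11 c2.val)))))))))))) := by decide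

theorem key3 (g : Fin 12 → Bool) (c1 c2 : Fin 6)
    (h : ((if g 0 then (1:ℕ) else 0) + ((if g 1 then (1:ℕ) else 0) + ((if g 2 then (1:ℕ) else 0) + ((if g 3 then (1:ℕ) else 0) + ((if g 4 then (1:ℕ) else 0) + ((if g 5 then (1:ℕ) else 0) + ((if g 6 then (1:ℕ) else 0) + ((if g 7 then (1:ℕ) else 0) + ((if g 8 then (1:ℕ) else 0) + ((if g 9 then (1:ℕ) else 0) + ((if g 10 then (1:ℕ) else 0) + ((if g 11 then (1:ℕ) else 0))))))))))))) = 6) :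
    11 ≤ (if g 0 then dis 0 c1.val else dis 0 c2.val) + ((if g 1 then dis 1 c1.val else dis 1 c2.val) + ((if g 2 then dis 2 c1.val else dis 2 c2.val) + ((if g 3 then dis 3 c1.val else dis 3 c2.val) + ((if g 4 then dis 4 c1.val else dis 4 c2.val) + ((if g 5 then dis 5 c1.val else dis 5 c2.val) + ((if g 6 then dis 6 c1.val else dis 6 c2.val) + ((if g 7 then dis 7 c1.val else dis 7 c2.val) + ((if g 8 then dis 8 c1.val else dis 8 c2.val) + ((if g 9 then dis 9 c1.val else dis 9 c2.val) + ((if g 10 then dis 10 c1.val else dis 10 c2.val) + ((if g 11 then dis 11 c1.val else dis 11 c2.val)))))))))))) :=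
  key2 (g 0) (g 1) (g 2) (g 3) (g 4) (g 5) (g 6) (g 7) (g 8) (g 9) (g 10) (g 11) h c1 c2

theorem keyCBP : ∀ c1 c2 : Fin 6,
    13 ≤ dis 0 c1.val + (dis 1 c1.val + (dis 2 c1.val + (dis 3 c1.val + (dis 4 c1.val + (dis 5 c1.val + (dis 6 c2.val + (dis 7 c2.val + (dis 8 c2.val + (dis 9 c2.val + (dis 10 c2.val + (dis 11 c2.val))))))))))) := by decide

theorem disEq : ∀ (v : Fin 12) (c : Fin 6), posNC v c - 1 = dis v.val c.val := by decide

theorem sum12 (F : Fin 12 → ℕ) : ∑ v : Fin 12, F v =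
    F 0 + (F 1 + (F 2 + (F 3 + (F 4 + (F 5 + (F 6 + (F 7 + (F 8 + (F 9 + (F 10 + F 11)))))))))) := by
  simp [Fin.sum_univ_succ]

theorem monroe_pair (Φ : Fin 12 → Fin 6) (h : IsMonroe2of12 Φ) :
    ∃ c1 c2 : Fin 6, c1 ≠ c2 ∧ (∀ v, Φ v = c1 ∨ Φ v = c2) ∧
      (Finset.univ.filter (fun v => Φ v = c1)).card = 6 := by
  obtain ⟨c1, c2, hne, himg⟩ := Finset.card_eq_two.mp h.1
  refine ⟨c1, c2, hne, ?_, ?_⟩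
  · intro v
    have hv : Φ v ∈ Finset.univ.image Φ := Finset.mem_image_of_mem _ (Finset.mem_univ v)
    rw [himg] at hv
    simpa using hv
  · rcases h.2 c1 with h0 | h6
    · exfalso
      have hc1 : c1 ∈ Finset.univ.image Φ := by rw [himg]; simp
      obtain ⟨v, -, hv⟩ := Finset.mem_image.mp hc1
      have hv' : v ∈ Finset.univ.filter (fun v => Φ v = c1) := by simp [hv]
      have := Finset.card_pos.mpr ⟨v, hv'⟩
      omega
    · exact h6

theorem lower11 (Φ : Fin 12 → Fin 6) (h : IsMonroe2of12 Φ) : 11 ≤ cost12 Φ := by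
  obtain ⟨c1, c2, hne, hall, hcard⟩ := monroe_pair Φ h
  set g : Fin 12 → Bool := fun v => decide (Φ v = c1) with hg
  have hterm : ∀ v : Fin 12, posNC v (Φ v) - 1 =
      if g v then dis v.val c1.val else dis v.val c2.val := by
    intro v
    rcases hall v with hv | hv
    · simp [hg, hv, disEq]
    · have : Φ v ≠ c1 := by rw [hv]; exact fun hx => hne hx.symm
      simp [hg, hv, this, disEq, Ne.symm hne]
  have hcnt : ∀ v : Fin 12, (if Φ v = c1 then (1:ℕ) else 0) = (if g v then (1:ℕ) else 0) := by
    intro v; simp [hg]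
  have hsum : (∑ v : Fin 12, if g v then (1:ℕ) else 0) = 6 := by
    rw [← Finset.sum_congr rfl (fun v _ => hcnt v), ← Finset.card_filter]
    exact hcard
  rw [sum12 (fun v => if g v then (1:ℕ) else 0)] at hsum
  have hcost : cost12 Φ = ∑ v : Fin 12, if g v then dis v.val c1.val else dis v.val c2.val :=
    Finset.sum_congr rfl (fun v _ => hterm v)
  rw [hcost, sum12 (fun v => if g v then dis v.val c1.val else dis v.val c2.val)]
  exact key3 g c1 c2 hsum

theorem card_le_filter (t' : ℕ)
    (h : ((Finset.univ : Finset (Fin 12)).filter (fun v : Fin 12 => (v : ℕ) ≤ t')).card = 6) :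
    t' = 5 := by
  by_cases h11 : 11 ≤ t'
  · exfalso
    have heq : (Finset.univ : Finset (Fin 12)).filter (fun v : Fin 12 => (v : ℕ) ≤ t') =
        Finset.univ := by
      apply Finset.filter_true_of_mem
      intro v _
      exact le_trans (Nat.le_of_lt_succ v.isLt) h11
    rw [heq] at h
    simp at h
  · push_neg at h11
    interval_cases t' <;> revert h <;> decide

theorem lower13 (Φ : Fin 12 → Fin 6) (h : IsMonroe2of12 Φ) (hc : CBP12 Φ) : 13 ≤ cost12 Φ := by
  obtain ⟨d1, d2, hne, hall, -⟩ := monroe_pair Φ h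
  set c1 : Fin 6 := Φ 0 with hc1
  obtain ⟨t, t', hiff⟩ := hc c1 ⟨0, rfl⟩
  have h0 : t ≤ ((0 : Fin 12) : ℕ) ∧ ((0 : Fin 12) : ℕ) ≤ t' := (hiff 0).mp rfl
  have ht : t = 0 := by simpa using h0.1
  have hcard6 : (Finset.univ.filter (fun v => Φ v = c1)).card = 6 := by
    rcases h.2 c1 with h0' | h6
    · exfalso
      have : (0 : Fin 12) ∈ Finset.univ.filter (fun v => Φ v = c1) := by simp [hc1]
      have := Finset.card_pos.mpr ⟨_, this⟩
      omega
    · exact h6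
  have hfe : (Finset.univ.filter (fun v => Φ v = c1)) =
      (Finset.univ.filter (fun v : Fin 12 => (v : ℕ) ≤ t')) := by
    apply Finset.filter_congr
    intro v _
    rw [hiff v, ht]
    simp
  rw [hfe] at hcard6
  have ht5 : t' = 5 := card_le_filter t' hcard6
  have hiff5 : ∀ v : Fin 12, Φ v = c1 ↔ (v : ℕ) ≤ 5 := by
    intro v
    rw [hiff v, ht, ht5]
    simp
  have hc1mem : c1 = d1 ∨ c1 = d2 := hall 0
  set c2 : Fin 6 := Φ 6 with hc2
  have hc2ne : c2 ≠ c1 := fun hx => absurd ((hiff5 6).mp hx) (by decide)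
  have hother : ∀ v : Fin 12, ¬ ((v : ℕ) ≤ 5) → Φ v = c2 := by
    intro v hv
    have h1 : Φ v ≠ c1 := fun hx => hv ((hiff5 v).mp hx)
    rcases hall v with h' | h' <;> rcases hc1mem with h'' | h'' <;>
      rcases hall 6 with h6 | h6 <;> simp_all [hc2]
  have hΦ : ∀ v : Fin 12, Φ v = if (v : ℕ) ≤ 5 then c1 else c2 := by
    intro v
    by_cases hv : (v : ℕ) ≤ 5
    · simp [hv, (hiff5 v).mpr hv]
    · simp [hv, hother v hv]
  have hcost : cost12 Φ = ∑ v : Fin 12,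
      (if (v : ℕ) ≤ 5 then dis v.val c1.val else dis v.val c2.val) := by
    apply Finset.sum_congr rfl
    intro v _
    rw [hΦ v]
    by_cases hv : (v : ℕ) ≤ 5 <;> simp [hv, disEq]
  rw [hcost, sum12 (fun v => if (v : ℕ) ≤ 5 then dis v.val c1.val else dis v.val c2.val)]
  norm_num
  exact keyCBP c1 c2

/-- the minimum utilitarian Borda cost over all 2-Monroe assignments
is 11, achieved by assigning `e` to `v₁, v₂, v₉, …, v₁₂` and `c` to `v₃, …, v₈`;
the minimum over 2-Monroe assignments with the contiguous blocks property is 13. -/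
theorem monroe_example_costs :
    (IsMonroe2of12 (fun v => if (v : ℕ) ≤ 1 ∨ 8 ≤ (v : ℕ) then (4 : Fin 6) else 2) ∧
      cost12 (fun v => if (v : ℕ) ≤ 1 ∨ 8 ≤ (v : ℕ) then (4 : Fin 6) else 2) = 11) ∧
    (∀ Φ, IsMonroe2of12 Φ → 11 ≤ cost12 Φ) ∧
    (∃ Φ, IsMonroe2of12 Φ ∧ CBP12 Φ ∧ cost12 Φ = 13) ∧
    (∀ Φ, IsMonroe2of12 Φ → CBP12 Φ → 13 ≤ cost12 Φ) := by
  refine ⟨⟨by unfold IsMonroe2of12; decide, by decide⟩, lower11,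
    ⟨fun v => if (v : ℕ) ≤ 5 then 1 else 3, by unfold IsMonroe2of12; decide, ?_, by decide⟩, lower13⟩
  intro c hex
  have hc : c = 1 ∨ c = 3 := by
    obtain ⟨v, hv⟩ := hex
    by_cases h : (v : ℕ) ≤ 5
    · left; rw [← hv]; simp [h]
    · right; rw [← hv]; simp [h]
  rcases hc with rfl | rfl
  · exact ⟨0, 5, by decide⟩
  · exact ⟨6, 11, by decide⟩
end

section
/- In the 4-voter election of Example non-contig-sp (candidates {x_1,...,x_m, y_1,...,y_m, a, b, c, d}), for k = 2 and Borda dissatisfaction: assigning a to voters v_1, v_3 and d to voters v_2, v_4 yields a 2-Monroe assignment with utilitarian cost 4 and egalitarian cost 2; whereas every 2-Monroe assignment in which each selected candidate's voters form a contiguous block in the order (v_1, v_2, v_3, v_4) has utilitarian cost at least 2(m+1) and egalitarian cost at least m+1. -/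
/-- The election of Example `non-contig-sp` (see statement 13 for the encoding):
candidates `Fin (2*m+4)` with index `m` = `a`, `m+1` = `b`, `m+2` = `c`,
`m+3` = `d`; `posSP m v k` is the 1-based rank of candidate `k` for voter `v`. -/
def posSP (m : ℕ) (v : Fin 4) (c : Fin (2 * m + 4)) : ℕ :=
  let k := (c : ℕ)
  if (v : ℕ) = 0 then (if k < m then m - k + 1 else if k = m then 1 else k + 1)
  else if (v : ℕ) = 1 then (if k ≤ m then 2 * m + 4 - k else k - m)
  else if (v : ℕ) = 2 then (if k ≤ m + 2 then m + 3 - k else k + 1)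
  else (if k ≤ m + 2 then 2 * m + 4 - k else k - m - 2)

/-- A 2-Monroe assignment for the 4 voters: exactly 2 candidates used, each
assigned to exactly 2 voters. -/
def IsMonroe2of4 (m : ℕ) (Φ : Fin 4 → Fin (2 * m + 4)) : Prop :=
  (Finset.univ.image Φ).card = 2 ∧
  ∀ c : Fin (2 * m + 4), (Finset.univ.filter (fun v => Φ v = c)).card = 0 ∨
    (Finset.univ.filter (fun v => Φ v = c)).card = 2

/-- Contiguous blocks property with respect to the voter order `(v₁,v₂,v₃,v₄)`. -/
def CBP4 (m : ℕ) (Φ : Fin 4 → Fin (2 * m + 4)) : Prop :=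
  ∀ c : Fin (2 * m + 4), (∃ v, Φ v = c) → ∃ t t' : ℕ,
    ∀ v : Fin 4, Φ v = c ↔ (t ≤ (v : ℕ) ∧ (v : ℕ) ≤ t')

lemma cardfilter (m : ℕ) (Φ : Fin 4 → Fin (2 * m + 4)) (c : Fin (2 * m + 4)) :
    (Finset.univ.filter (fun v => Φ v = c)).card =
    (if Φ 0 = c then 1 else 0) + (if Φ 1 = c then 1 else 0) +
    (if Φ 2 = c then 1 else 0) + (if Φ 3 = c then 1 else 0) := by
  rw [Finset.card_filter, Fin.sum_univ_four]

lemma blocks (m : ℕ) (Φ : Fin 4 → Fin (2 * m + 4))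
    (hM : IsMonroe2of4 m Φ) (hC : CBP4 m Φ) : Φ 1 = Φ 0 ∧ Φ 3 = Φ 2 := by
  obtain ⟨t, t', hiff⟩ := hC (Φ 0) ⟨0, rfl⟩
  have h0 := (hiff 0).mp rfl
  have hc0 : (Finset.univ.filter (fun v => Φ v = Φ 0)).card = 2 := by
    rcases (hM.2 (Φ 0)) with h | h
    · exfalso
      rw [cardfilter] at h
      simp at h
    · exact h
  rw [cardfilter] at hc0
  simp only [Fin.val_zero] at h0
  have key : Φ 1 = Φ 0 ∧ Φ 2 ≠ Φ 0 ∧ Φ 3 ≠ Φ 0 := by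
    have i1 := hiff 1; have i2 := hiff 2; have i3 := hiff 3
    simp only [Fin.val_one, show ((2:Fin 4):ℕ) = 2 from rfl,
      show ((3:Fin 4):ℕ) = 3 from rfl] at i1 i2 i3
    by_cases h1 : Φ 1 = Φ 0 <;> by_cases h2 : Φ 2 = Φ 0 <;> by_cases h3 : Φ 3 = Φ 0 <;>
      simp only [h1, h2, h3, if_pos, if_neg, if_true, if_false, ite_true, ite_false,
        if_pos rfl] at hc0 <;>
      first
        | exact ⟨h1, h2, h3⟩
        | (exfalso; rw [i1] at h1; rw [i2] at h2; rw [i3] at h3; omega)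
        | (exfalso; omega)
  obtain ⟨k1, k2, k3⟩ := key
  -- second block
  obtain ⟨s, s', hiff2⟩ := hC (Φ 2) ⟨2, rfl⟩
  have g2 := (hiff2 2).mp rfl
  have g1 : ¬ (Φ 1 = Φ 2) := by rw [k1]; exact fun h => k2 h.symm
  rw [hiff2 1] at g1
  simp only [Fin.val_one, show ((2:Fin 4):ℕ) = 2 from rfl] at g1 g2
  have hc2 : (Finset.univ.filter (fun v => Φ v = Φ 2)).card = 2 := by
    rcases (hM.2 (Φ 2)) with h | h
    · exfalso; rw [cardfilter] at h; simp at h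
    · exact h
  rw [cardfilter] at hc2
  have g3 : Φ 3 = Φ 2 := by
    by_cases h3 : Φ 3 = Φ 2
    · exact h3
    · exfalso
      have e0 : Φ 0 ≠ Φ 2 := fun h => k2 h.symm
      have e1 : Φ 1 ≠ Φ 2 := by rw [k1]; exact fun h => k2 h.symm
      rw [if_neg e0, if_neg e1, if_pos rfl, if_neg h3] at hc2
      omega
  exact ⟨k1, g3⟩

/-- assigning `a` to `v₁, v₃` and `d` to `v₂, v₄` is a 2-Monroe
assignment of utilitarian Borda cost 4 and egalitarian Borda cost 2, whereas every
2-Monroe assignment with the contiguous blocks property has utilitarian cost at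
least `2(m+1)` and egalitarian cost at least `m+1`. -/
theorem monroe_single_peaked_contiguous_counterexample (m : ℕ) (hm : 0 < m) :
    (IsMonroe2of4 m (fun v => if (v : ℕ) = 0 ∨ (v : ℕ) = 2
        then (⟨m, by omega⟩ : Fin (2 * m + 4)) else ⟨m + 3, by omega⟩) ∧
      (∑ v : Fin 4, (posSP m v ((fun v : Fin 4 => if (v : ℕ) = 0 ∨ (v : ℕ) = 2
        then (⟨m, by omega⟩ : Fin (2 * m + 4)) else ⟨m + 3, by omega⟩) v) - 1)) = 4 ∧
      (Finset.univ.sup fun v : Fin 4 =>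
          posSP m v ((fun v : Fin 4 => if (v : ℕ) = 0 ∨ (v : ℕ) = 2
            then (⟨m, by omega⟩ : Fin (2 * m + 4)) else ⟨m + 3, by omega⟩) v) - 1) = 2) ∧
    (∀ Φ : Fin 4 → Fin (2 * m + 4), IsMonroe2of4 m Φ → CBP4 m Φ →
      2 * (m + 1) ≤ (∑ v : Fin 4, (posSP m v (Φ v) - 1)) ∧
      m + 1 ≤ Finset.univ.sup fun v : Fin 4 => posSP m v (Φ v) - 1) := by
  set a : Fin (2*m+4) := ⟨m, by omega⟩ with ha
  set d : Fin (2*m+4) := ⟨m+3, by omega⟩ with hd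
  have had : a ≠ d := by simp [ha, hd, Fin.ext_iff]
  constructor
  · refine ⟨⟨?_, ?_⟩, ?_, ?_⟩
    · -- image card = 2
      have : (Finset.univ.image (fun v : Fin 4 => if (v : ℕ) = 0 ∨ (v : ℕ) = 2
          then a else d)) = {a, d} := by
        ext c
        simp only [Finset.mem_image, Finset.mem_insert, Finset.mem_singleton]
        constructor
        · rintro ⟨v, -, rfl⟩; split_ifs <;> simp
        · rintro (rfl | rfl)
          · exact ⟨0, Finset.mem_univ _, by norm_num⟩
          · exact ⟨1, Finset.mem_univ _, by norm_num⟩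
      rw [this, Finset.card_insert_of_notMem (by simpa using had), Finset.card_singleton]
    · -- count condition
      intro c
      rw [cardfilter]
      simp only [show ((0:Fin 4):ℕ) = 0 from rfl, show ((1:Fin 4):ℕ) = 1 from rfl,
        show ((2:Fin 4):ℕ) = 2 from rfl, show ((3:Fin 4):ℕ) = 3 from rfl]
      norm_num [Fin.ext_iff, ha, hd]
      by_cases h1 : m = (c : ℕ) <;> by_cases h2 : m + 3 = (c : ℕ) <;>
        simp [h1, h2] <;> omega
    · -- sum = 4
      rw [Fin.sum_univ_four]
      simp only [posSP, Fin.val_zero, Fin.val_one, show ((2:Fin 4):ℕ) = 2 from rfl,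
        show ((3:Fin 4):ℕ) = 3 from rfl]
      norm_num [ha, hd]
    · -- sup = 2
      have huniv : (Finset.univ : Finset (Fin 4)) = {0, 1, 2, 3} := by decide
      rw [huniv]
      simp only [Finset.sup_insert, Finset.sup_singleton]
      simp only [posSP, Fin.val_zero, Fin.val_one, show ((2:Fin 4):ℕ) = 2 from rfl,
        show ((3:Fin 4):ℕ) = 3 from rfl]
      norm_num [ha, hd]
  · intro Φ hM hC
    obtain ⟨h10, h32⟩ := blocks m Φ hM hC
    have hc0 := (Φ 0).isLt
    have hc2 := (Φ 2).isLt
    constructor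
    · rw [Fin.sum_univ_four, h10, h32]
      have p1 : m + 1 ≤ (posSP m 0 (Φ 0) - 1) + (posSP m 1 (Φ 0) - 1) := by
        simp only [posSP, Fin.val_zero, Fin.val_one]
        norm_num
        split_ifs <;> omega
      have p2 : m + 1 ≤ (posSP m 2 (Φ 2) - 1) + (posSP m 3 (Φ 2) - 1) := by
        simp only [posSP, show ((2:Fin 4):ℕ) = 2 from rfl, show ((3:Fin 4):ℕ) = 3 from rfl]
        norm_num
        split_ifs <;> omega
      omega
    · have key : m + 1 ≤ posSP m 0 (Φ 0) - 1 ∨ m + 1 ≤ posSP m 1 (Φ 1) - 1 := by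
        rw [h10]
        simp only [posSP, Fin.val_zero, Fin.val_one]
        norm_num
        split_ifs <;> omega
      rcases key with h | h
      · exact le_trans h (Finset.le_sup (f := fun v : Fin 4 => posSP m v (Φ v) - 1) (Finset.mem_univ (0 : Fin 4)))
      · exact le_trans h (Finset.le_sup (f := fun v : Fin 4 => posSP m v (Φ v) - 1) (Finset.mem_univ (1 : Fin 4)))
end

section
/- In the 4-voter election of Example non-contig-sp, under the Borda dissatisfaction function, every 2-CC assignment (using at most 2 candidates) in which each used candidate's assigned voters form a contiguous block in the order (v_1, v_2, v_3, v_4) assigns at least one voter to a candidate that this voter ranks in position m+2 or lower; hence its egalitarian cost is at least m+1. -/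
/-- every 2-CC assignment (at most two candidates used) whose
assigned voter sets are contiguous blocks in the order `(v₁,v₂,v₃,v₄)` assigns some
voter to a candidate she ranks in position `m+2` or lower; hence its egalitarian
Borda cost is at least `m+1`. -/
theorem cc_single_peaked_contiguous_counterexample (m : ℕ) (hm : 0 < m) :
    ∀ Φ : Fin 4 → Fin (2 * m + 4),
      (Finset.univ.image Φ).card ≤ 2 →
      (∀ c : Fin (2 * m + 4), (∃ v, Φ v = c) → ∃ t t' : ℕ,
        ∀ v : Fin 4, Φ v = c ↔ (t ≤ (v : ℕ) ∧ (v : ℕ) ≤ t')) →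
      (∃ v : Fin 4, m + 2 ≤ posSP m v (Φ v)) ∧
      m + 1 ≤ Finset.univ.sup fun v : Fin 4 => posSP m v (Φ v) - 1 := by
  intro Φ hcard hcontig
  have key : ∃ v : Fin 4, m + 2 ≤ posSP m v (Φ v) := by
    by_contra hno
    push_neg at hno
    have h0 := hno 0
    have h1 := hno 1
    have h2 := hno 2
    have h3 := hno 3
    simp only [posSP] at h0 h1 h2 h3
    norm_num at h0 h1 h2 h3
    -- extract numeric bounds
    have k0 : (Φ 0 : ℕ) ≤ m := by split_ifs at h0 <;> omega
    have k1 : m + 1 ≤ (Φ 1 : ℕ) := by split_ifs at h1 <;> omega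
    have k2 : (Φ 2 : ℕ) ≤ m + 2 := by split_ifs at h2 <;> omega
    have k3 : m + 3 ≤ (Φ 3 : ℕ) := by split_ifs at h3 <;> omega
    have ne01 : Φ 0 ≠ Φ 1 := fun h => by
      have := congrArg Fin.val h; omega
    have ne03 : Φ 0 ≠ Φ 3 := fun h => by
      have := congrArg Fin.val h; omega
    have ne23 : Φ 2 ≠ Φ 3 := fun h => by
      have := congrArg Fin.val h; omega
    -- from card ≤ 2: Φ 2 ∈ {Φ 0, Φ 1} and Φ 3 ∈ {Φ 0, Φ 1}
    have hmem : ∀ w : Fin 4, Φ w = Φ 0 ∨ Φ w = Φ 1 := by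
      intro w
      by_contra hw
      push_neg at hw
      have hsub : ({Φ 0, Φ 1, Φ w} : Finset _) ⊆ Finset.univ.image Φ := by
        intro x hx
        simp only [Finset.mem_insert, Finset.mem_singleton] at hx
        rcases hx with h | h | h <;> (subst h; exact Finset.mem_image_of_mem Φ (Finset.mem_univ _))
      have hc3 : ({Φ 0, Φ 1, Φ w} : Finset _).card = 3 := by
        rw [Finset.card_insert_of_notMem (by
            simp only [Finset.mem_insert, Finset.mem_singleton]
            push_neg
            exact ⟨ne01, fun h => hw.1 h.symm⟩),
          Finset.card_insert_of_notMem (by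
            simp only [Finset.mem_singleton]
            exact fun h => hw.2 h.symm),
          Finset.card_singleton]
      have := Finset.card_le_card hsub
      omega
    have h3eq : Φ 3 = Φ 1 := by
      rcases hmem 3 with h | h
      · exact absurd h.symm ne03
      · exact h
    have h2eq : Φ 2 = Φ 0 := by
      rcases hmem 2 with h | h
      · exact h
      · exact absurd (h.trans h3eq.symm) ne23
    obtain ⟨t, t', hc⟩ := hcontig (Φ 0) ⟨0, rfl⟩
    have hA := (hc 0).mp rfl
    have hB := (hc 2).mp h2eq
    have hC : Φ 1 = Φ 0 := (hc 1).mpr (by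
      simp only [Fin.val_zero, Fin.val_one, Fin.val_two] at hA hB ⊢
      omega)
    exact ne01 hC.symm
  refine ⟨key, ?_⟩
  obtain ⟨v, hv⟩ := key
  have hle : posSP m v (Φ v) - 1 ≤
      Finset.univ.sup fun v : Fin 4 => posSP m v (Φ v) - 1 :=
    Finset.le_sup (f := fun v : Fin 4 => posSP m v (Φ v) - 1) (Finset.mem_univ v)
  omega
end

section
/- Let E = (C, V) be a single-crossing election and let D_1, ..., D_t be a partition of C into clone sets such that contracting each D_i to a single candidate yields a single-crossing election, with the first voter's order of the form D_1 ≻ D_2 ≻ ⋯ ≻ D_t. Then for every k, dissatisfaction function α, and ℓ ∈ {ℓ_1, ℓ_∞}, there exists an optimal k-CC assignment Φ under α-ℓ-CC such that for each clone set D_i with Φ^{-1}(D_i) ≠ ∅, the set of voters assigned to candidates in D_i is a contiguous block {v_{t_i}, ..., v_{t_i'}} of the voter order, and these blocks are ordered consistently with the sets: i < j with both nonempty implies t_i' < t_j. -/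
/-- clone-set generalization of the contiguous blocks lemma.
Candidates are `Fin m`, voters `Fin n`, voter `v` ranks `c` in 1-based position
`(prefs v c : ℕ) + 1`. The partition into clone sets `D_1 ≻ ⋯ ≻ D_s` is given by
`part : Fin m → Fin s` (candidate `c` belongs to `D_{part c}`); each class is a
clone set (consecutive in every vote), the contracted election is single-crossing,
and the first voter's order is of the form `D_1 ≻ D_2 ≻ ⋯ ≻ D_s`. Then for every
`k`, dissatisfaction function `α`, and `ℓ ∈ {ℓ_1, ℓ_∞}`, some optimal `k`-CC
assignment assigns to each clone set a contiguous block of voters, the blocks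
being ordered consistently with the clone sets. -/
theorem cc_clone_contiguous_blocks {m n s : ℕ} (hn : 0 < n)
    (prefs : Fin n → (Fin m ≃ Fin m))
    (part : Fin m → Fin s) (hsurj : Function.Surjective part)
    -- each class is a clone set: candidates of a class are consecutive in every vote
    (hclone : ∀ v : Fin n, ∀ a b c : Fin m, part a = part b →
      (prefs v a : ℕ) ≤ prefs v c → (prefs v c : ℕ) ≤ prefs v b → part c = part a)
    -- contracting each class yields a single-crossing election
    (hsc : ∀ i j : Fin s, i ≠ j →
      (∃ a b : Fin m, part a = i ∧ part b = j ∧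
        (prefs ⟨0, hn⟩ a : ℕ) < prefs ⟨0, hn⟩ b) →
      ∃ t : ℕ, ∀ v : Fin n,
        ((∃ a b : Fin m, part a = i ∧ part b = j ∧ (prefs v a : ℕ) < prefs v b) ↔
          (v : ℕ) < t))
    -- the first voter's order is of the form D_1 ≻ D_2 ≻ ⋯ ≻ D_s
    (hfirst : ∀ a b : Fin m, part a < part b →
      (prefs ⟨0, hn⟩ a : ℕ) < prefs ⟨0, hn⟩ b)
    (k : ℕ) (hk1 : 1 ≤ k) (hkm : k ≤ m)
    (α : ℕ → ℕ) (hα : Monotone α) (hα1 : α 1 = 0)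
    (cost : (Fin n → Fin m) → ℕ)
    (hcost : cost = (fun Φ => ∑ v : Fin n, α ((prefs v (Φ v) : ℕ) + 1)) ∨
             cost = (fun Φ => Finset.univ.sup fun v : Fin n => α ((prefs v (Φ v) : ℕ) + 1))) :
    ∃ Φ : Fin n → Fin m,
      (Finset.univ.image Φ).card ≤ k ∧
      (∀ Ψ : Fin n → Fin m, (Finset.univ.image Ψ).card ≤ k → cost Φ ≤ cost Ψ) ∧
      (∀ i : Fin s, (∃ v, part (Φ v) = i) → ∃ t t' : ℕ, t ≤ t' ∧
        ∀ v : Fin n, part (Φ v) = i ↔ (t ≤ (v : ℕ) ∧ (v : ℕ) ≤ t')) ∧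
      (∀ i j : Fin s, i < j → ∀ v w : Fin n,
        part (Φ v) = i → part (Φ w) = j → v < w) := by
  classical
  have hm : 0 < m := lt_of_lt_of_le hk1 hkm
  have huniv : (Finset.univ : Finset (Fin n)).Nonempty := ⟨⟨0, hn⟩, Finset.mem_univ _⟩
  have hfeas : (Finset.univ.image (fun _ : Fin n => (⟨0, hm⟩ : Fin m))).card ≤ k := by
    rw [Finset.image_const huniv]
    simpa using hk1
  obtain ⟨Φ0, hΦ0mem, hΦ0min⟩ :=
    Finset.exists_min_image (Finset.univ.filter
      (fun Φ : Fin n → Fin m => (Finset.univ.image Φ).card ≤ k)) cost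
      ⟨fun _ => ⟨0, hm⟩, Finset.mem_filter.2 ⟨Finset.mem_univ _, hfeas⟩⟩
  have hΦ0k : (Finset.univ.image Φ0).card ≤ k := (Finset.mem_filter.1 hΦ0mem).2
  have hΦ0opt : ∀ Ψ, (Finset.univ.image Ψ).card ≤ k → cost Φ0 ≤ cost Ψ := fun Ψ hΨ =>
    hΦ0min Ψ (Finset.mem_filter.2 ⟨Finset.mem_univ _, hΨ⟩)
  set W := Finset.univ.image Φ0 with hW
  have hWne : W.Nonempty := huniv.image _
  have hminv : ∀ v : Fin n, ∃ c ∈ W, ∀ c' ∈ W, (prefs v c : ℕ) ≤ (prefs v c' : ℕ) :=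
    fun v => Finset.exists_min_image W (fun c => (prefs v c : ℕ)) hWne
  choose Φ hΦW hΦfav using hminv
  have hΦstrict : ∀ (v : Fin n) (c : Fin m), c ∈ W → part c ≠ part (Φ v) →
      (prefs v (Φ v) : ℕ) < (prefs v c : ℕ) := by
    intro v c hc hne
    rcases lt_or_eq_of_le (hΦfav v c hc) with h | h
    · exact h
    · exfalso
      apply hne
      have : Φ v = c := (prefs v).injective (Fin.val_injective h)
      rw [this]
  have ivl : ∀ (v : Fin n) (a b a' b' : Fin m), part a ≠ part b →
      part a' = part a → part b' = part b → (prefs v a : ℕ) < (prefs v b : ℕ) →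
      (prefs v a' : ℕ) < (prefs v b' : ℕ) := by
    intro v a b a' b' hab ha' hb' hlt
    by_contra hcon
    push_neg at hcon
    have hba' : (prefs v b' : ℕ) < (prefs v a' : ℕ) := by
      rcases lt_or_eq_of_le hcon with h | h
      · exact h
      · exfalso
        have hba : b' = a' := (prefs v).injective (Fin.val_injective h)
        apply hab
        rw [← ha', ← hb', hba]
    rcases lt_trichotomy ((prefs v a : ℕ)) ((prefs v b' : ℕ)) with h | h | h
    · have hthis := hclone v a a' b' ha'.symm (le_of_lt h) (le_of_lt hba')
      exact hab ((hb'.symm.trans hthis).symm)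
    · exact hab ((congrArg part ((prefs v).injective (Fin.val_injective h))).trans hb')
    · have hthis := hclone v b' b a hb' (le_of_lt h) (le_of_lt hlt)
      exact hab (hthis.trans hb')
  have hkey : ∀ i j : Fin s, i < j → ∀ v w : Fin n,
      part (Φ v) = i → part (Φ w) = j → v < w := by
    intro i j hij v w hv hw
    have hne : i ≠ j := ne_of_lt hij
    obtain ⟨t0, ht0⟩ := hsc i j hne ⟨Φ v, Φ w, hv, hw,
      hfirst _ _ (by rw [hv, hw]; exact hij)⟩
    have hv0 : (v : ℕ) < t0 := (ht0 v).1 ⟨Φ v, Φ w, hv, hw,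
      hΦstrict v (Φ w) (hΦW w) (by rw [hv, hw]; exact hne.symm)⟩
    have hw0 : ¬ ((w : ℕ) < t0) := by
      intro hlt
      obtain ⟨a, b, ha, hb, hab⟩ := (ht0 w).2 hlt
      have h1 : (prefs w (Φ w) : ℕ) < (prefs w (Φ v) : ℕ) :=
        hΦstrict w (Φ v) (hΦW v) (by rw [hv, hw]; exact hne)
      have h2 := ivl w a b (Φ v) (Φ w) (by rw [ha, hb]; exact hne)
        (hv.trans ha.symm) (hw.trans hb.symm) hab
      omega
    exact Fin.lt_def.2 (by omega)
  refine ⟨Φ, ?_, ?_, ?_, hkey⟩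
  · refine le_trans (Finset.card_le_card ?_) hΦ0k
    intro c hc
    obtain ⟨v, _, rfl⟩ := Finset.mem_image.1 hc
    exact hΦW v
  · intro Ψ hΨ
    refine le_trans ?_ (hΦ0opt Ψ hΨ)
    have hpt : ∀ v : Fin n, α ((prefs v (Φ v) : ℕ) + 1) ≤ α ((prefs v (Φ0 v) : ℕ) + 1) := by
      intro v
      apply hα
      have := hΦfav v (Φ0 v) (Finset.mem_image_of_mem Φ0 (Finset.mem_univ v))
      omega
    rcases hcost with h | h <;> subst h
    · exact Finset.sum_le_sum fun v _ => hpt v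
    · exact Finset.sup_mono_fun fun v _ => hpt v
  · rintro i ⟨v0, hv0⟩
    set T := Finset.univ.filter (fun v : Fin n => part (Φ v) = i) with hT
    have hTne : T.Nonempty := ⟨v0, by simp [hT, hv0]⟩
    have hmem : ∀ v ∈ T, part (Φ v) = i := fun v hv => (Finset.mem_filter.1 hv).2
    refine ⟨((T.min' hTne : Fin n) : ℕ), ((T.max' hTne : Fin n) : ℕ), ?_, ?_⟩
    · exact Fin.le_def.1 (T.min'_le _ (T.max'_mem hTne))
    · intro v
      constructor
      · intro hv
        have hvT : v ∈ T := Finset.mem_filter.2 ⟨Finset.mem_univ _, hv⟩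
        exact ⟨Fin.le_def.1 (T.min'_le _ hvT), Fin.le_def.1 (T.le_max' _ hvT)⟩
      · rintro ⟨h1, h2⟩
        rcases lt_trichotomy (part (Φ v)) i with h | h | h
        · have := hkey (part (Φ v)) i h v (T.min' hTne) rfl (hmem _ (T.min'_mem hTne))
          exact absurd (Fin.lt_def.1 this) (by omega)
        · exact h
        · have := hkey i (part (Φ v)) h (T.max' hTne) v (hmem _ (T.max'_mem hTne)) rfl
          exact absurd (Fin.lt_def.1 this) (by omega)
end
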